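/- arXiv:1501.03135 — 12 statements merged into one kernel-verified Lean document; each statement's English description precedes it below -/
import Mathlib

section
/- For all integers s, r, q with 1 ≤ s ≤ r and q ≥ 0, the following Hankel determinant with Hahn-weight entries evaluates in closed product form: det_{1≤j,k≤s}[ Σ_{m=0}^{r-1} m^{j+k-2} · C(m+q, m) ] = ∏_{j=0}^{s-1} (j! · (j+q)!)² · (j+q+r)! / ( q! · (r−j−1)! · (2j+q)! · (2j+q+1)! ). (Here C(·,·) denotes the binomial coefficient and the convention m^0 = 1 is used, including for m = 0; the identity is an equality of rational numbers.) -/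
/-!
The moment matrix `M = (μ(X^(j+k)))` of the functional `μ p = ∑_{m<r} C(m+q, m) p(m)` is
triangularised by the Hahn polynomials `P_n`: if `L` is the lower triangular matrix of their
coefficients, then `L * M = (μ(P_n X^k))` is upper triangular, so `det M` is the product of
`μ(P_n X^n)` divided by the product of the leading coefficients of the `P_n`.

The `P_n` are found through a discrete Rodrigues formula: with
`F_n(t) = C(t+q, q+n) C(n+r-1-t, n)` one has `C(m+q, m) P_n(m) = Δⁿ F_n(m)` on `0 ≤ m < r`, which
follows from the Leibniz rule for `Δⁿ`. Since `F_n` vanishes at the boundary, summation by parts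
turns `μ(P_n p)` into `(-1)ⁿ ∑_m F_n(m+n) Δⁿ p(m)`, which is `0` for `deg p < n`, while for
`p = Xⁿ` it is `(-1)ⁿ n! ∑_m F_n(m+n)`, a Vandermonde convolution. The leading coefficient of
`P_n` is another Vandermonde sum.
-/

open Finset Polynomial fwdDiff

section FwdDiff

variable {M R : Type*} [AddCommMonoid M] [Ring R]

theorem fwdDiff_iter_mul (h : M) (f g : M → R) (n : ℕ) (y : M) :
    Δ_[h] ^[n] (f * g) y =
      ∑ k ∈ range (n + 1), n.choose k * (Δ_[h] ^[k] f y * Δ_[h] ^[n - k] g (y + k • h)) := by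
  induction n generalizing f g with
  | zero => simp
  | succ n ih =>
    have hfg : Δ_[h] (f * g) = Δ_[h] f * (fun x => g (x + h)) + f * Δ_[h] g := by
      ext x
      simp only [fwdDiff, Pi.mul_apply, Pi.add_apply]
      noncomm_ring
    rw [Function.iterate_succ_apply, hfg, fwdDiff_iter_add, Pi.add_apply, ih, ih,
      sum_choose_succ_mul (fun i j => Δ_[h] ^[i] f y * Δ_[h] ^[j] g (y + i • h)), add_comm]
    congr 1 <;> refine sum_congr rfl fun k hk => ?_
    · rw [Nat.sub_add_comm (mem_range_succ_iff.mp hk), Function.iterate_succ_apply]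
    · rw [fwdDiff_iter_comp_add, ← Function.iterate_succ_apply, succ_nsmul, add_assoc]

theorem fwdDiff_iter_natCast_choose (j k : ℕ) :
    Δ_[1] ^[k] (fun x : ℕ => (x.choose (k + j) : R)) = fun x => (x.choose j : R) := by
  induction k generalizing j with
  | zero => simp
  | succ k ih =>
    have hstep : Δ_[1] (fun x : ℕ => (x.choose (k + 1 + j) : R)) =
        fun x => (x.choose (k + j) : R) := by
      ext x
      simp [fwdDiff, show k + 1 + j = k + j + 1 by omega, Nat.choose_succ_succ']
    rw [Function.iterate_succ_apply, hstep, ih]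

theorem fwdDiff_iter_natCast_choose_sub (c i j t : ℕ) (h : t + j ≤ c) :
    Δ_[1] ^[j] (fun x : ℕ => ((c - x).choose (i + j) : R)) t =
      (-1) ^ j * ((c - j - t).choose i : R) := by
  induction j generalizing i t with
  | zero => simp
  | succ j ih =>
    rw [Function.iterate_succ_apply', fwdDiff, show i + (j + 1) = i + 1 + j by omega,
      ih _ _ (by omega), ih _ _ (by omega), show c - j - t = c - (j + 1) - t + 1 by omega,
      Nat.choose_succ_succ', show c - j - (t + 1) = c - (j + 1) - t by omega]
    push_cast
    noncomm_ring

theorem fwdDiff_iter_comp_natCast {S G : Type*} [Semiring S] [AddCommGroup G] (f : S → G)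
    (n m : ℕ) : Δ_[1] ^[n] (fun x : ℕ => f x) m = Δ_[1] ^[n] f m := by
  simp [fwdDiff_iter_eq_sum_shift]

theorem sum_range_fwdDiff_mul (F g : ℕ → R) (r : ℕ) (h0 : F 0 = 0) (hr : F r = 0) :
    ∑ m ∈ range r, Δ_[1] F m * g m = -∑ m ∈ range r, F (m + 1) * Δ_[1] g m := by
  have hshift : ∑ m ∈ range r, F m * g m = ∑ m ∈ range r, F (m + 1) * g (m + 1) := by
    have h := (sum_range_succ (fun m => F m * g m) r).symm.trans
      (sum_range_succ' (fun m => F m * g m) r)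
    simpa [h0, hr] using h
  simp only [fwdDiff, sub_mul, mul_sub, sum_sub_distrib, hshift, neg_sub]

theorem sum_range_fwdDiff_iter_mul (F g : ℕ → R) (n r : ℕ) (h0 : ∀ t < n, F t = 0)
    (hr : ∀ t, r ≤ t → t < r + n → F t = 0) :
    ∑ m ∈ range r, Δ_[1] ^[n] F m * g m =
      (-1) ^ n * ∑ m ∈ range r, F (m + n) * Δ_[1] ^[n] g m := by
  induction n generalizing F with
  | zero => simp
  | succ n ih =>
    have h0' : ∀ t < n, Δ_[1] F t = 0 := fun t ht => by
      simp [fwdDiff, h0 t (by omega), h0 (t + 1) (by omega)]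
    have hr' : ∀ t, r ≤ t → t < r + n → Δ_[1] F t = 0 := fun t ht ht' => by
      simp [fwdDiff, hr t ht (by omega), hr (t + 1) (by omega) (by omega)]
    have hparts := sum_range_fwdDiff_mul (fun t => F (t + n)) (Δ_[1] ^[n] g) r
      (by simpa using h0 n (by omega)) (hr (r + n) (by omega) (by omega))
    simp only [fwdDiff_comp_add, add_right_comm _ 1 n] at hparts
    rw [Function.iterate_succ_apply, ih _ h0' hr', pow_succ, mul_assoc, hparts,
      Function.iterate_succ_apply', neg_one_mul]
    simp only [add_assoc]

end FwdDiff

theorem Nat.sum_antidiagonal_add_choose_mul_add_choose (a b N : ℕ) :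
    ∑ ij ∈ antidiagonal N, (a + ij.1).choose a * (b + ij.2).choose b =
      (a + b + 1 + N).choose (a + b + 1) := by
  -- compare coefficients in `(1 - X)⁻¹ ^ (a + 1) * (1 - X)⁻¹ ^ (b + 1) = (1 - X)⁻¹ ^ (a + b + 2)`
  have h := congrArg (fun u => PowerSeries.coeff N u.val)
    (PowerSeries.invOneSubPow_add ℤ (a + 1) (b + 1))
  simp only [Units.val_mul, PowerSeries.coeff_mul, show a + 1 + (b + 1) = a + b + 1 + 1 by omega,
    PowerSeries.invOneSubPow_val_succ_eq_mk_add_choose, PowerSeries.coeff_mk] at h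
  exact_mod_cast h.symm

theorem Nat.sum_range_choose_mul_choose (n m : ℕ) :
    ∑ k ∈ range (n + 1), n.choose k * m.choose k = (n + m).choose n := by
  rw [Nat.add_choose_eq,
    Finset.Nat.sum_antidiagonal_eq_sum_range_succ (fun i j => n.choose i * m.choose j),
    ← sum_range_reflect]
  refine sum_congr rfl fun k hk => ?_
  rw [Nat.add_sub_cancel, Nat.choose_symm (mem_range_succ_iff.mp hk)]

theorem Nat.add_choose_add_mul_factorial (m q a : ℕ) :
    (m + q).choose (q + a) * (q + a).factorial =
      (m + q).choose q * q.factorial * m.descFactorial a := by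
  have h := Nat.descFactorial_mul_descFactorial (n := m + q) (Nat.le_add_right q a)
  rw [Nat.add_sub_cancel, Nat.add_sub_cancel_left,
    Nat.descFactorial_eq_factorial_mul_choose (m + q),
    Nat.descFactorial_eq_factorial_mul_choose (m + q) (q + a)] at h
  rw [mul_comm, ← h]
  ring

section Pochhammer

variable {R : Type*} [CommRing R] [IsDomain R]

theorem monic_descPochhammer_mul_ascPochhammer_comp (a b : ℕ) (c : R) :
    (descPochhammer R a * (ascPochhammer R b).comp (X - C c)).Monic :=
  (monic_descPochhammer R a).mul ((monic_ascPochhammer R b).comp_X_sub_C c)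

theorem natDegree_descPochhammer_mul_ascPochhammer_comp (a b : ℕ) (c : R) :
    (descPochhammer R a * (ascPochhammer R b).comp (X - C c)).natDegree = a + b := by
  rw [(monic_descPochhammer R a).natDegree_mul ((monic_ascPochhammer R b).comp_X_sub_C c),
    descPochhammer_natDegree, natDegree_comp, ascPochhammer_natDegree, natDegree_X_sub_C,
    mul_one]

end Pochhammer

theorem prod_coeff_mul_det_hankel {R : Type*} [CommRing R] {s : ℕ} (μ : R[X] →ₗ[R] R)
    (P : Fin s → R[X]) (hdeg : ∀ n, (P n).natDegree ≤ n)
    (horth : ∀ (n : Fin s) (k : ℕ), k < n → μ (P n * X ^ k) = 0) :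
    (∏ n, (P n).coeff n) * (Matrix.of fun j k : Fin s => μ (X ^ ((j : ℕ) + k))).det =
      ∏ n, μ (P n * X ^ (n : ℕ)) := by
  set L : Matrix (Fin s) (Fin s) R := Matrix.of fun n i => (P n).coeff i
  have hL : L.IsLowerTriangular := fun n i hni =>
    coeff_eq_zero_of_natDegree_lt ((hdeg n).trans_lt hni)
  have hLM : L * Matrix.of (fun j k : Fin s => μ (X ^ ((j : ℕ) + k))) =
      Matrix.of fun n k : Fin s => μ (P n * X ^ (k : ℕ)) := by
    ext n k
    have hP : P n = ∑ i : Fin s, C ((P n).coeff i) * X ^ (i : ℕ) := by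
      rw [Fin.sum_univ_eq_sum_range (fun i => C ((P n).coeff i) * X ^ i)]
      exact as_sum_range_C_mul_X_pow' _ ((hdeg n).trans_lt n.isLt)
    rw [Matrix.of_apply, hP]
    simp [L, Matrix.mul_apply, sum_mul, ← pow_add, ← smul_eq_C_mul]
  have hN : (Matrix.of fun n k : Fin s => μ (P n * X ^ (k : ℕ))).IsUpperTriangular :=
    fun n k hkn => horth n k hkn
  have hdetL : L.det = ∏ n, (P n).coeff n := Matrix.det_of_isLowerTriangular L hL
  rw [← hdetL, ← Matrix.det_mul, hLM, Matrix.det_of_isUpperTriangular hN]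
  rfl

section Hahn

variable (q r : ℕ)

/-- `n + r - 1 - t` is truncated, but only the values at `t < n + r` are ever used. -/
def rodriguesFun (n t : ℕ) : ℚ := (t + q).choose (q + n) * (n + r - 1 - t).choose n

noncomputable def hahnFunctional : ℚ[X] →ₗ[ℚ] ℚ :=
  ∑ m ∈ range r, ((m + q).choose m : ℚ) • leval (m : ℚ)

/-- The Leibniz expansion of `Δⁿ (rodriguesFun q r n)` divided by the weight `C(x+q, x)`:
`C(x+q, q+n-k) / C(x+q, q) = q! x^(n-k falling) / (q+n-k)!` and
`C(r-1-x, k) = (-1)^k (x-r+1)^(k rising) / k!`. -/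
noncomputable def hahnPoly (n : ℕ) : ℚ[X] :=
  ∑ k ∈ range (n + 1),
    C ((-1 : ℚ) ^ n * n.choose k * q.factorial / ((q + (n - k)).factorial * k.factorial)) *
      (descPochhammer ℚ (n - k) * (ascPochhammer ℚ k).comp (X - C ((r : ℚ) - 1)))

variable {q r}

theorem hahnFunctional_apply (p : ℚ[X]) :
    hahnFunctional q r p = ∑ m ∈ range r, ((m + q).choose m : ℚ) * p.eval (m : ℚ) := by
  simp [hahnFunctional]

theorem rodriguesFun_eq_zero_of_lt {n t : ℕ} (ht : t < n) : rodriguesFun q r n t = 0 := by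
  simp [rodriguesFun, Nat.choose_eq_zero_of_lt (show t + q < q + n by omega)]

theorem rodriguesFun_eq_zero_of_le_of_lt {n t : ℕ} (hrt : r ≤ t) (ht : t < r + n) :
    rodriguesFun q r n t = 0 := by
  simp [rodriguesFun, Nat.choose_eq_zero_of_lt (show n + r - 1 - t < n by omega)]

theorem fwdDiff_iter_rodriguesFun {n m : ℕ} (hm : m < r) :
    Δ_[1] ^[n] (rodriguesFun q r n) m = ∑ k ∈ range (n + 1),
      (-1 : ℚ) ^ (n - k) * n.choose k * (m + q).choose (q + (n - k)) * (r - 1 - m).choose k := by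
  have hF : rodriguesFun q r n =
      (fun t : ℕ => ((t + q).choose (q + n) : ℚ)) * fun t => ((n + r - 1 - t).choose n : ℚ) :=
    rfl
  rw [hF, fwdDiff_iter_mul]
  refine sum_congr rfl fun k hk => ?_
  have hk : k ≤ n := mem_range_succ_iff.mp hk
  have h1 := fwdDiff_iter_comp_add 1 (fun x : ℕ => (x.choose (k + (q + (n - k))) : ℚ)) q k m
  rw [fwdDiff_iter_natCast_choose, show k + (q + (n - k)) = q + n by omega] at h1
  have h2 := fwdDiff_iter_natCast_choose_sub (R := ℚ) (n + r - 1) k (n - k) (m + k) (by omega)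
  rw [Nat.add_sub_cancel' hk, show n + r - 1 - (n - k) - (m + k) = r - 1 - m by omega] at h2
  rw [h1, smul_eq_mul, mul_one, h2]
  ring

theorem choose_mul_eval_hahnPoly {n m : ℕ} (hm : m < r) :
    ((m + q).choose m : ℚ) * (hahnPoly q r n).eval (m : ℚ) =
      Δ_[1] ^[n] (rodriguesFun q r n) m := by
  rw [fwdDiff_iter_rodriguesFun hm, hahnPoly, eval_finsetSum, mul_sum]
  refine sum_congr rfl fun k hk => ?_
  have hk : k ≤ n := mem_range_succ_iff.mp hk
  have hasc : ((ascPochhammer ℚ k).comp (X - C ((r : ℚ) - 1))).eval (m : ℚ) =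
      (-1) ^ k * ((r - 1 - m).choose k * k.factorial) := by
    rw [eval_comp, eval_sub, eval_X, eval_C,
      show (m : ℚ) - ((r : ℚ) - 1) = -((r - 1 - m : ℕ) : ℚ) by
        push_cast [Nat.cast_sub (show 1 ≤ r by omega), Nat.cast_sub (show m ≤ r - 1 by omega)]
        ring,
      ascPochhammer_eval_neg_eq_descPochhammer, descPochhammer_eval_eq_descFactorial,
      Nat.descFactorial_eq_factorial_mul_choose]
    push_cast
    ring
  have hw : ((m + q).choose (q + (n - k)) : ℚ) =
      (m + q).choose q * q.factorial * m.descFactorial (n - k) / (q + (n - k)).factorial := by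
    rw [eq_div_iff (by positivity)]
    exact_mod_cast Nat.add_choose_add_mul_factorial m q (n - k)
  have hsign : (-1 : ℚ) ^ (n - k) = (-1) ^ n * (-1) ^ k := by
    rw [← Nat.sub_add_cancel hk, pow_add, Nat.add_sub_cancel, mul_assoc, ← mul_pow]
    norm_num
  rw [eval_mul, eval_C, eval_mul, descPochhammer_eval_eq_descFactorial, hasc, hw, hsign,
    Nat.choose_symm_add]
  field_simp

theorem natDegree_hahnPoly_le (n : ℕ) : (hahnPoly q r n).natDegree ≤ n :=
  natDegree_sum_le_of_forall_le _ _ fun k hk => (natDegree_C_mul_le _ _).trans <| by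
    rw [natDegree_descPochhammer_mul_ascPochhammer_comp,
      Nat.sub_add_cancel (mem_range_succ_iff.mp hk)]

theorem coeff_hahnPoly_self (n : ℕ) :
    (hahnPoly q r n).coeff n =
      (-1) ^ n * q.factorial * (2 * n + q).choose n / (q + n).factorial := by
  have hterm : ∀ k ∈ range (n + 1),
      (C ((-1 : ℚ) ^ n * n.choose k * q.factorial / ((q + (n - k)).factorial * k.factorial)) *
        (descPochhammer ℚ (n - k) * (ascPochhammer ℚ k).comp (X - C ((r : ℚ) - 1)))).coeff n =
      (-1) ^ n * q.factorial / (q + n).factorial * (n.choose k * (q + n).choose k : ℕ) := by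
    intro k hk
    have hk : k ≤ n := mem_range_succ_iff.mp hk
    have hdeg := natDegree_descPochhammer_mul_ascPochhammer_comp (n - k) k ((r : ℚ) - 1)
    rw [Nat.sub_add_cancel hk] at hdeg
    have hlead :=
      (monic_descPochhammer_mul_ascPochhammer_comp (n - k) k ((r : ℚ) - 1)).coeff_natDegree
    rw [hdeg] at hlead
    rw [coeff_C_mul, hlead, Nat.cast_mul, Nat.cast_choose ℚ (show k ≤ q + n by omega),
      show q + n - k = q + (n - k) by omega]
    field_simp
  rw [hahnPoly, finsetSum_coeff, sum_congr rfl hterm, ← mul_sum, ← Nat.cast_sum,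
    Nat.sum_range_choose_mul_choose, show n + (q + n) = 2 * n + q by omega]
  ring

theorem sum_rodriguesFun {n : ℕ} (hn : n < r) :
    ∑ m ∈ range r, rodriguesFun q r n (m + n) = (q + n + r).choose (q + 2 * n + 1) := by
  set N := r - 1 - n
  have hsub : range (N + 1) ⊆ range r := range_subset_range.mpr (by omega)
  rw [← sum_subset hsub fun m hm hmN => by
    simp [rodriguesFun, Nat.choose_eq_zero_of_lt
      (show n + r - 1 - (m + n) < n by simp only [mem_range] at hm hmN; omega)]]
  have h := Nat.sum_antidiagonal_add_choose_mul_add_choose (q + n) n N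
  rw [Finset.Nat.sum_antidiagonal_eq_sum_range_succ
      (fun i j => (q + n + i).choose (q + n) * (n + j).choose n),
    show q + n + n + 1 + N = q + n + r by omega,
    show q + n + n + 1 = q + 2 * n + 1 by omega] at h
  rw [← h, Nat.cast_sum]
  refine sum_congr rfl fun m hm => ?_
  rw [rodriguesFun, show m + n + q = q + n + m by omega,
    show n + r - 1 - (m + n) = n + (N - m) by simp only [mem_range] at hm; omega]
  push_cast
  rfl

theorem hahnFunctional_hahnPoly_mul (n : ℕ) (p : ℚ[X]) :
    hahnFunctional q r (hahnPoly q r n * p) =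
      (-1) ^ n * ∑ m ∈ range r, rodriguesFun q r n (m + n) * Δ_[1] ^[n] p.eval (m : ℚ) := by
  have hw : ∀ m ∈ range r, ((m + q).choose m : ℚ) * (hahnPoly q r n * p).eval (m : ℚ) =
      Δ_[1] ^[n] (rodriguesFun q r n) m * (fun m : ℕ => p.eval (m : ℚ)) m := fun m hm => by
    rw [eval_mul, ← mul_assoc, choose_mul_eval_hahnPoly (mem_range.mp hm)]
  rw [hahnFunctional_apply, sum_congr rfl hw,
    sum_range_fwdDiff_iter_mul _ _ _ _ (fun t => rodriguesFun_eq_zero_of_lt)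
      (fun t => rodriguesFun_eq_zero_of_le_of_lt)]
  simp only [fwdDiff_iter_comp_natCast (fun x : ℚ => p.eval x)]

theorem hahnFunctional_hahnPoly_mul_X_pow_of_lt {n k : ℕ} (hk : k < n) :
    hahnFunctional q r (hahnPoly q r n * X ^ k) = 0 := by
  rw [hahnFunctional_hahnPoly_mul,
    fwdDiff_iter_eq_zero_of_degree_lt (by rwa [natDegree_X_pow])]
  simp

theorem hahnFunctional_hahnPoly_mul_X_pow_self {n : ℕ} (hn : n < r) :
    hahnFunctional q r (hahnPoly q r n * X ^ n) =
      (-1) ^ n * n.factorial * (q + n + r).choose (q + 2 * n + 1) := by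
  have h := fwdDiff_iter_degree_eq_factorial (X ^ n : ℚ[X])
  rw [natDegree_X_pow, leadingCoeff_X_pow, one_smul] at h
  rw [hahnFunctional_hahnPoly_mul, h]
  simp only [Pi.natCast_apply, ← sum_mul, sum_rodriguesFun hn]
  ring

theorem hahnFunctional_hahnPoly_mul_X_pow_div_coeff {n : ℕ} (hn : n < r) :
    hahnFunctional q r (hahnPoly q r n * X ^ n) / (hahnPoly q r n).coeff n =
      ((n.factorial : ℚ) * (n + q).factorial) ^ 2 * (n + q + r).factorial /
        ((q.factorial : ℚ) * (r - n - 1).factorial * (2 * n + q).factorial *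
          (2 * n + q + 1).factorial) := by
  rw [hahnFunctional_hahnPoly_mul_X_pow_self hn, coeff_hahnPoly_self,
    Nat.cast_choose ℚ (show q + 2 * n + 1 ≤ q + n + r by omega),
    Nat.cast_choose ℚ (show n ≤ 2 * n + q by omega),
    show q + n + r - (q + 2 * n + 1) = r - n - 1 by omega, show 2 * n + q - n = q + n by omega,
    show q + n + r = n + q + r by omega, show q + 2 * n + 1 = 2 * n + q + 1 by omega,
    show q + n = n + q by omega]
  field_simp

end Hahn

theorem hahn_gram_determinant_general (s r q : ℕ) (hsr : s ≤ r) :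
    Matrix.det (Matrix.of fun j k : Fin s =>
        ∑ m ∈ Finset.range r,
          (m : ℚ) ^ ((j : ℕ) + (k : ℕ)) * (Nat.choose (m + q) m : ℚ))
      =
    ∏ j ∈ Finset.range s,
      ((Nat.factorial j : ℚ) * (Nat.factorial (j + q) : ℚ)) ^ 2 *
          (Nat.factorial (j + q + r) : ℚ) /
        ((Nat.factorial q : ℚ) * (Nat.factorial (r - j - 1) : ℚ) *
          (Nat.factorial (2 * j + q) : ℚ) * (Nat.factorial (2 * j + q + 1) : ℚ)) := by
  have key := prod_coeff_mul_det_hankel (hahnFunctional q r) (fun n : Fin s => hahnPoly q r n)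
    (fun n => natDegree_hahnPoly_le n) (fun n k hk => hahnFunctional_hahnPoly_mul_X_pow_of_lt hk)
  have hM : (Matrix.of fun j k : Fin s => hahnFunctional q r (X ^ ((j : ℕ) + k))) =
      Matrix.of fun j k : Fin s => ∑ m ∈ range r, (m : ℚ) ^ ((j : ℕ) + k) * (m + q).choose m := by
    ext j k
    simp [hahnFunctional_apply, mul_comm]
  have hlc : ∏ n : Fin s, (hahnPoly q r n).coeff n ≠ 0 :=
    prod_ne_zero_iff.mpr fun n _ => by
      simp [coeff_hahnPoly_self, Nat.factorial_ne_zero, Nat.choose_eq_zero_iff]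
      omega
  rw [hM, mul_comm, ← eq_div_iff hlc] at key
  rw [key, ← prod_div_distrib, ← Fin.prod_univ_eq_prod_range]
  exact prod_congr rfl fun n _ => hahnFunctional_hahnPoly_mul_X_pow_div_coeff (by omega)

/-- closed product evaluation of the Hankel determinant with Hahn-weight
entries: `det_{1≤j,k≤s}[ Σ_{m=0}^{r-1} m^{j+k-2} C(m+q,m) ]
= ∏_{j=0}^{s-1} (j!(j+q)!)² (j+q+r)! / ( q! (r−j−1)! (2j+q)! (2j+q+1)! )`,
as an identity of rational numbers. -/
theorem hahn_gram_determinant (s r q : ℕ) (hs : 1 ≤ s) (hsr : s ≤ r) :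
    Matrix.det (Matrix.of fun j k : Fin s =>
        ∑ m ∈ Finset.range r,
          (m : ℚ) ^ ((j : ℕ) + (k : ℕ)) * (Nat.choose (m + q) m : ℚ))
      =
    ∏ j ∈ Finset.range s,
      ((Nat.factorial j : ℚ) * (Nat.factorial (j + q) : ℚ)) ^ 2 *
          (Nat.factorial (j + q + r) : ℚ) /
        ((Nat.factorial q : ℚ) * (Nat.factorial (r - j - 1) : ℚ) *
          (Nat.factorial (2 * j + q) : ℚ) * (Nat.factorial (2 * j + q + 1) : ℚ)) :=
  hahn_gram_determinant_general s r q hsr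
end

section
/- For all integers s, r, q with 1 ≤ s ≤ r and q ≥ 0, the discrete Coulomb-gas sum evaluated at α = 1 is given by the closed product: I_{r,s,q}(1) = ∏_{j=0}^{s-1} j! · (j+q)! · (j+q+r)! / ( (r−j−1)! · (2j+q)! · (2j+q+1)! ). -/
open Finset

open Matrix Equiv

/-- The discrete Coulomb-gas sum
`I_{r,s,q}(α) = (1/s!) ∏_{j=0}^{s-1} q!/(j!(j+q)!) ·
Σ_{m_1,…,m_s=0}^{r-1} ∏_{j<k}(m_j−m_k)² ∏_j C(q+m_j,q) α^{m_j}`. -/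
noncomputable def coulombSum (r s q : ℕ) (α : ℝ) : ℝ :=
  (1 / (Nat.factorial s : ℝ)) *
    (∏ j ∈ Finset.range s,
      (Nat.factorial q : ℝ) / ((Nat.factorial j : ℝ) * (Nat.factorial (j + q) : ℝ))) *
    ∑ m : Fin s → Fin r,
      (∏ p ∈ Finset.univ.filter fun p : Fin s × Fin s => p.1 < p.2,
          (((m p.1 : ℕ) : ℝ) - ((m p.2 : ℕ) : ℝ)) ^ 2) *
        ∏ j : Fin s, (Nat.choose (q + (m j : ℕ)) q : ℝ) * α ^ ((m j : ℕ))

private def eps {s : ℕ} (σ : Equiv.Perm (Fin s)) : ℝ := ((Equiv.Perm.sign σ : ℤ) : ℝ)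

private lemma eps_mul {s : ℕ} (σ τ : Equiv.Perm (Fin s)) : eps (σ * τ) = eps σ * eps τ := by
  simp [eps, ← Int.cast_mul, ← Units.val_mul]

private lemma eps_sq {s : ℕ} (τ : Equiv.Perm (Fin s)) : eps τ * eps τ = 1 := by
  have : (Equiv.Perm.sign τ : ℤ) = 1 ∨ (Equiv.Perm.sign τ : ℤ) = -1 := Int.isUnit_iff.mp (Units.isUnit _)
  rcases this with h | h <;> simp [eps, h]

private lemma det_eq_sum_eps {s : ℕ} (M : Matrix (Fin s) (Fin s) ℝ) :
    M.det = ∑ σ : Equiv.Perm (Fin s), eps σ * ∏ i, M (σ i) i :=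
  Matrix.det_apply' M

lemma andreief {s r : ℕ} (F G : Fin s → Fin r → ℝ) :
    ∑ m : Fin s → Fin r,
      (Matrix.det (Matrix.of fun i j => F i (m j))) *
      (Matrix.det (Matrix.of fun i j => G i (m j)))
    = (Nat.factorial s : ℝ) *
      Matrix.det (Matrix.of fun i j : Fin s => ∑ x : Fin r, F i x * G j x) := by
  set M : Matrix (Fin s) (Fin s) ℝ := Matrix.of fun i j : Fin s => ∑ x : Fin r, F i x * G j x with hM
  calc
    ∑ m : Fin s → Fin r,
      (Matrix.det (Matrix.of fun i j => F i (m j))) *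
      (Matrix.det (Matrix.of fun i j => G i (m j)))
      = ∑ m : Fin s → Fin r, ∑ σ : Perm (Fin s), ∑ τ : Perm (Fin s),
          (eps σ * eps τ) * ∏ j, (F (σ j) (m j) * G (τ j) (m j)) := by
        refine Finset.sum_congr rfl fun m _ => ?_
        rw [det_eq_sum_eps, det_eq_sum_eps, Finset.sum_mul_sum]
        refine Finset.sum_congr rfl fun σ _ => Finset.sum_congr rfl fun τ _ => ?_
        rw [Finset.prod_mul_distrib]
        show (eps σ * ∏ i, F (σ i) (m i)) * (eps τ * ∏ i, G (τ i) (m i)) = _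
        ring
    _ = ∑ σ : Perm (Fin s), ∑ τ : Perm (Fin s),
          (eps σ * eps τ) * ∏ j, ∑ x : Fin r, F (σ j) x * G (τ j) x := by
        rw [Finset.sum_comm]
        refine Finset.sum_congr rfl fun σ _ => ?_
        rw [Finset.sum_comm]
        refine Finset.sum_congr rfl fun τ _ => ?_
        rw [← Finset.mul_sum]
        congr 1
        rw [Finset.prod_univ_sum, ← Fintype.piFinset_univ]
    _ = ∑ τ : Perm (Fin s), ∑ σ : Perm (Fin s),
          (eps σ * eps τ) * ∏ j, M (σ j) (τ j) := by
        rw [Finset.sum_comm]; rfl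
    _ = ∑ τ : Perm (Fin s), Matrix.det M := by
        refine Finset.sum_congr rfl fun τ _ => ?_
        have reidx : ∀ σ : Perm (Fin s), (∏ j, M (σ j) (τ j)) = ∏ j, M (σ (τ⁻¹ j)) j := by
          intro σ
          rw [← Equiv.prod_comp τ (fun j => M (σ (τ⁻¹ j)) j)]
          simp
        calc ∑ σ : Perm (Fin s), (eps σ * eps τ) * ∏ j, M (σ j) (τ j)
            = ∑ σ : Perm (Fin s), eps (σ * τ⁻¹) * ∏ j, M ((σ * τ⁻¹) j) j := by
              refine Finset.sum_congr rfl fun σ _ => ?_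
              rw [reidx]
              show eps σ * eps τ * ∏ j, M (σ (τ⁻¹ j)) j = eps (σ * τ⁻¹) * ∏ j, M (σ (τ⁻¹ j)) j
              congr 1
              have : eps (σ * τ⁻¹) * (eps τ⁻¹ * eps τ⁻¹) = eps (σ * τ⁻¹) := by
                rw [eps_sq, mul_one]
              calc eps σ * eps τ = eps σ * eps τ⁻¹ := by
                    congr 1
                    simp [eps]
                _ = eps (σ * τ⁻¹) := (eps_mul σ τ⁻¹).symm
          _ = ∑ σ : Perm (Fin s), eps σ * ∏ j, M (σ j) j :=
              Equiv.sum_comp (Equiv.mulRight τ⁻¹) (fun σ => eps σ * ∏ j, M (σ j) j)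
          _ = Matrix.det M := (det_eq_sum_eps M).symm
    _ = (Nat.factorial s : ℝ) * Matrix.det M := by
        rw [Finset.sum_const, nsmul_eq_mul]
        congr 1
        simp [Fintype.card_perm]


lemma prod_pairs {s : ℕ} (f : Fin s → Fin s → ℝ) :
    ∏ p ∈ Finset.univ.filter (fun p : Fin s × Fin s => p.1 < p.2), f p.1 p.2
      = ∏ i : Fin s, ∏ j ∈ Finset.Ioi i, f i j := by
  rw [← Finset.prod_sigma (Finset.univ : Finset (Fin s)) (fun i => Finset.Ioi i)
    (fun p => f p.1 p.2)]
  refine Finset.prod_nbij (fun p => ⟨p.1, p.2⟩) ?_ ?_ ?_ ?_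
  · rintro ⟨a, b⟩ h
    simp only [Finset.mem_filter, Finset.mem_univ, true_and] at h
    simp [Finset.mem_sigma, Finset.mem_Ioi, h]
  · rintro ⟨a, b⟩ h ⟨c, d⟩ h' hh
    simp only [Sigma.mk.inj_iff, heq_eq_eq] at hh
    exact Prod.ext hh.1 hh.2
  · rintro ⟨a, b⟩ h
    simp only [Finset.mem_coe, Finset.mem_sigma, Finset.mem_Ioi] at h
    exact ⟨(a, b), by simp [h.2], rfl⟩
  · rintro ⟨a, b⟩ h
    rfl

lemma prod_pairs' {s : ℕ} (f : Fin s → Fin s → ℝ) :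
    ∏ p ∈ Finset.univ.filter (fun p : Fin s × Fin s => p.1 < p.2), f p.1 p.2
      = ∏ j : Fin s, ∏ i ∈ Finset.Iio j, f i j := by
  rw [← Finset.prod_sigma (Finset.univ : Finset (Fin s)) (fun j => Finset.Iio j)
    (fun p => f p.2 p.1)]
  refine Finset.prod_nbij (fun p => ⟨p.2, p.1⟩) ?_ ?_ ?_ ?_
  · rintro ⟨a, b⟩ h
    simp only [Finset.mem_filter, Finset.mem_univ, true_and] at h
    simp [Finset.mem_sigma, Finset.mem_Iio, h]
  · rintro ⟨a, b⟩ h ⟨c, d⟩ h' hh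
    simp only [Sigma.mk.inj_iff, heq_eq_eq] at hh
    exact Prod.ext hh.2 hh.1
  · rintro ⟨a, b⟩ h
    simp only [Finset.mem_coe, Finset.mem_sigma, Finset.mem_Iio] at h
    exact ⟨(b, a), by simp [h.2], rfl⟩
  · rintro ⟨a, b⟩ h
    rfl


lemma det_eval_monic {s : ℕ} (p : Fin s → Polynomial ℝ)
    (hm : ∀ j, (p j).Monic) (hd : ∀ j, (p j).natDegree = (j : ℕ)) (x : Fin s → ℝ) :
    Matrix.det (Matrix.of fun i j => (p j).eval (x i)) = Matrix.det (Matrix.vandermonde x) := by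
  have key : (Matrix.of fun i j => (p j).eval (x i))
      = Matrix.vandermonde x * Matrix.of (fun k j : Fin s => (p j).coeff (k : ℕ)) := by
    ext i j
    rw [Matrix.mul_apply]
    simp only [Matrix.vandermonde_apply, Matrix.of_apply]
    rw [Polynomial.eval_eq_sum_range' (n := s) (by rw [hd j]; exact j.isLt)]
    rw [← Fin.sum_univ_eq_sum_range (fun k => (p j).coeff k * x i ^ k)]
    exact Finset.sum_congr rfl fun k _ => mul_comm _ _
  rw [key, Matrix.det_mul]
  have htri : Matrix.det (Matrix.of fun k j : Fin s => (p j).coeff (k : ℕ)) = 1 := by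
    rw [Matrix.det_of_upperTriangular]
    · rw [Finset.prod_eq_one]
      intro j _
      have := hm j
      simp only [Matrix.of_apply]
      rw [← hd j]
      exact this
    · intro k j h
      simp only [Matrix.of_apply]
      exact Polynomial.coeff_eq_zero_of_natDegree_lt (by rw [hd j]; exact h)
  rw [htri, mul_one]

lemma vand_conv (i : ℕ) : ∀ N k : ℕ,
    ∑ y ∈ Finset.range (N + 1), Nat.choose y i * Nat.choose (N - y) k
      = Nat.choose (N + 1) (i + k + 1) := by
  intro N
  induction N with
  | zero =>
    intro k
    cases i <;> cases k <;> simp [Nat.choose]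
  | succ N ih =>
    intro k
    rw [Finset.sum_range_succ]
    cases k with
    | zero =>
      simp only [Nat.choose_zero_right, Nat.mul_one]
      have h1 : ∑ y ∈ Finset.range (N + 1), Nat.choose y i = Nat.choose (N + 1) (i + 1) := by
        simpa using ih 0
      rw [h1]; simp only [Nat.add_zero]
      have h2 := Nat.choose_succ_succ' (N + 1) i
      omega
    | succ k' =>
      have split : ∀ y ∈ Finset.range (N + 1),
          Nat.choose y i * Nat.choose (N + 1 - y) (k' + 1)
            = Nat.choose y i * Nat.choose (N - y) k' + Nat.choose y i * Nat.choose (N - y) (k' + 1) := by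
        intro y hy
        rw [Finset.mem_range] at hy
        have : N + 1 - y = (N - y) + 1 := by omega
        rw [this, Nat.choose_succ_succ, Nat.mul_add]
      rw [Finset.sum_congr rfl split, Finset.sum_add_distrib, ih k', ih (k' + 1)]
      have h0 : Nat.choose 0 (k' + 1) = 0 := Nat.choose_eq_zero_of_lt (by omega)
      rw [Nat.sub_self, h0, Nat.mul_zero, Nat.add_zero]
      have e1 : i + (k' + 1) + 1 = i + k' + 1 + 1 := by omega
      rw [e1]
      have h2 := Nat.choose_succ_succ' (N + 1) (i + k' + 1)
      omega


lemma moment_sum (r q i j : ℕ) :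
    ∑ x ∈ Finset.range r, Nat.choose (r - 1 - x) i * Nat.choose (q + j + x) (q + j)
      = Nat.choose (q + j + r) (q + i + j + 1) := by
  rcases Nat.eq_zero_or_pos r with hr | hr
  · subst hr
    simp only [Finset.range_zero, Finset.sum_empty]
    rw [Nat.choose_eq_zero_of_lt (by omega)]
  set N := q + j + r - 1 with hN
  have hrefl := Finset.sum_range_reflect
    (fun y => Nat.choose y i * Nat.choose (N - y) (q + j)) r
  have step1 : ∑ x ∈ Finset.range r, Nat.choose (r - 1 - x) i * Nat.choose (q + j + x) (q + j)
      = ∑ x ∈ Finset.range r, (fun y => Nat.choose y i * Nat.choose (N - y) (q + j)) (r - 1 - x) := by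
    refine Finset.sum_congr rfl fun x hx => ?_
    rw [Finset.mem_range] at hx
    simp only
    congr 2
    omega
  rw [step1, hrefl]
  have step2 : ∑ x ∈ Finset.range r, Nat.choose x i * Nat.choose (N - x) (q + j)
      = ∑ x ∈ Finset.range (N + 1), Nat.choose x i * Nat.choose (N - x) (q + j) := by
    refine Finset.sum_subset (Finset.range_subset_range.mpr (by omega)) ?_
    intro x hx hx'
    rw [Finset.mem_range] at hx
    rw [Finset.mem_range, not_lt] at hx'
    have : N - x < q + j := by omega
    rw [Nat.choose_eq_zero_of_lt this, Nat.mul_zero]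
  rw [step2, vand_conv i N (q + j)]
  congr 1 <;> omega

lemma desc_prod (a i : ℕ) :
    ∏ u ∈ Finset.range i, ((a : ℝ) - u) = (Nat.factorial i : ℝ) * (Nat.choose a i : ℝ) := by
  induction i with
  | zero => simp
  | succ i ih =>
    rw [Finset.prod_range_succ, ih]
    rcases le_or_gt (i + 1) a with h | h
    · have key := Nat.choose_succ_right_eq a i
      have hcast : ((a : ℝ) - i) = ((a - i : ℕ) : ℝ) := by
        rw [Nat.cast_sub (by omega)]
      rw [hcast]
      have keyR : (Nat.choose a i : ℝ) * ((a - i : ℕ) : ℝ)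
          = (Nat.choose a (i + 1) : ℝ) * ((i + 1 : ℕ) : ℝ) := by
        exact_mod_cast congrArg (fun n : ℕ => (n : ℝ)) key.symm
      calc (Nat.factorial i : ℝ) * (Nat.choose a i : ℝ) * ((a - i : ℕ) : ℝ)
          = (Nat.factorial i : ℝ) * ((Nat.choose a i : ℝ) * ((a - i : ℕ) : ℝ)) := by ring
        _ = (Nat.factorial i : ℝ) * ((Nat.choose a (i + 1) : ℝ) * ((i + 1 : ℕ) : ℝ)) := by
            rw [keyR]
        _ = (Nat.factorial (i + 1) : ℝ) * (Nat.choose a (i + 1) : ℝ) := by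
            rw [Nat.factorial_succ]; push_cast; ring
    · rcases Nat.lt_or_ge a i with h2 | h2
      · rw [Nat.choose_eq_zero_of_lt h2,
          Nat.choose_eq_zero_of_lt (show a < i + 1 by omega)]
        simp
      · have : a = i := by omega
        subst this
        rw [Nat.choose_eq_zero_of_lt (show a < a + 1 by omega)]
        simp

lemma asc_prod (b j : ℕ) :
    (∏ u ∈ Finset.range j, ((b : ℝ) + 1 + u)) * (Nat.factorial b : ℝ)
      = (Nat.factorial (b + j) : ℝ) := by
  induction j with
  | zero => simp
  | succ j ih =>
    rw [Finset.prod_range_succ, show b + (j+1) = (b + j) + 1 by omega]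
    rw [Nat.factorial_succ]
    push_cast
    nlinarith [ih]

lemma factorial_prod_split (s q : ℕ) :
    (∏ j ∈ Finset.range s, (Nat.factorial (2 * j + q) : ℝ) * (Nat.factorial (2 * j + q + 1) : ℝ))
      = (∏ j ∈ Finset.range s, (Nat.factorial (q + j) : ℝ)) *
        ∏ j ∈ Finset.range s, (Nat.factorial (q + s + j) : ℝ) := by
  have h1 : ∀ n : ℕ, (∏ j ∈ Finset.range n, (Nat.factorial (2 * j + q) : ℝ) * (Nat.factorial (2 * j + q + 1) : ℝ))
      = ∏ j ∈ Finset.range (2 * n), (Nat.factorial (q + j) : ℝ) := by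
    intro n
    induction n with
    | zero => simp
    | succ n ih =>
      rw [Finset.prod_range_succ, ih, show 2 * (n + 1) = (2 * n) + 1 + 1 by omega]
      rw [Finset.prod_range_succ, Finset.prod_range_succ]
      rw [show q + 2 * n = 2 * n + q by omega, show q + (2 * n + 1) = 2 * n + q + 1 by omega]
      ring
  rw [h1 s, show 2 * s = s + s by omega, Finset.prod_range_add]
  congr 1
  exact Finset.prod_congr rfl fun j _ => by rw [show q + (s + j) = q + s + j by omega]
-- MAIN PART (appended to base.lean for testing)
open Polynomial in
lemma prodlin_monic (n : ℕ) (c : ℕ → ℝ) :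
    (∏ u ∈ Finset.range n, (Polynomial.X + Polynomial.C (c u))).Monic :=
  Polynomial.monic_prod_of_monic _ _ fun u _ => Polynomial.monic_X_add_C (c u)

open Polynomial in
lemma prodlin_natDegree (n : ℕ) (c : ℕ → ℝ) :
    (∏ u ∈ Finset.range n, (Polynomial.X + Polynomial.C (c u))).natDegree = n := by
  rw [Polynomial.natDegree_prod_of_monic _ _ fun u _ => Polynomial.monic_X_add_C (c u)]
  simp [Polynomial.natDegree_X_add_C]

lemma neg_desc (n : ℕ) :
    ∏ u ∈ Finset.range n, (((u : ℕ) : ℝ) - n) = (-1 : ℝ) ^ n * (Nat.factorial n : ℝ) := by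
  have h : ∀ u ∈ Finset.range n, ((u : ℝ) - n) = (-1) * ((n : ℝ) - u) := fun u _ => by ring
  rw [Finset.prod_congr rfl h, Finset.prod_mul_distrib, Finset.prod_const, desc_prod n n,
    Nat.choose_self, Finset.card_range]
  push_cast
  ring

lemma Iio_val_prod {s : ℕ} (j : Fin s) (g : ℕ → ℝ) :
    ∏ i ∈ Finset.Iio j, g (i : ℕ) = ∏ u ∈ Finset.range (j : ℕ), g u := by
  rw [← Nat.Iio_eq_range, ← Fin.map_valEmbedding_Iio, Finset.prod_map]
  rfl

lemma moment_real (r q i j : ℕ) (hir : i < r) :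
    ∑ x ∈ Finset.range r, (Nat.choose (r - 1 - x) i : ℝ) * (Nat.choose (q + j + x) (q + j) : ℝ)
      = (Nat.factorial (q + j + r) : ℝ) /
        ((Nat.factorial (q + i + j + 1) : ℝ) * (Nat.factorial (r - 1 - i) : ℝ)) := by
  have h1 : ∑ x ∈ Finset.range r, (Nat.choose (r - 1 - x) i : ℝ) * (Nat.choose (q + j + x) (q + j) : ℝ)
      = ((∑ x ∈ Finset.range r, Nat.choose (r - 1 - x) i * Nat.choose (q + j + x) (q + j) : ℕ) : ℝ) := by
    push_cast; rfl
  rw [h1, moment_sum r q i j, Nat.cast_choose ℝ (show q + i + j + 1 ≤ q + j + r by omega)]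
  have e : q + j + r - (q + i + j + 1) = r - 1 - i := by omega
  rw [e]

/-- evaluation of the discrete Coulomb-gas sum at α = 1:
`I_{r,s,q}(1) = ∏_{j=0}^{s-1} j! (j+q)! (j+q+r)! / ( (r−j−1)! (2j+q)! (2j+q+1)! )`. -/
theorem coulombSum_at_one (s r q : ℕ) (hs : 1 ≤ s) (hsr : s ≤ r) :
    coulombSum r s q 1 =
      ∏ j ∈ Finset.range s,
        (Nat.factorial j : ℝ) * (Nat.factorial (j + q) : ℝ) *
            (Nat.factorial (j + q + r) : ℝ) /
          ((Nat.factorial (r - j - 1) : ℝ) * (Nat.factorial (2 * j + q) : ℝ) *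
            (Nat.factorial (2 * j + q + 1) : ℝ)) := by
  classical
  have facne : ∀ n : ℕ, (Nat.factorial n : ℝ) ≠ 0 := fun n =>
    Nat.cast_ne_zero.mpr (Nat.factorial_ne_zero n)
  set w : ℕ → ℝ := fun x => (Nat.choose (q + x) q : ℝ) with hw
  set fpoly : Fin s → Polynomial ℝ := fun i =>
    ∏ u ∈ Finset.range (i : ℕ), (Polynomial.X + Polynomial.C (-((r : ℝ) - 1 - u))) with hfpoly
  set gpoly : Fin s → Polynomial ℝ := fun i =>
    ∏ u ∈ Finset.range (i : ℕ), (Polynomial.X + Polynomial.C ((q : ℝ) + 1 + u)) with hgpoly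
  set F : Fin s → Fin r → ℝ := fun i x => (fpoly i).eval ((x : ℕ) : ℝ) with hF
  set G : Fin s → Fin r → ℝ := fun j x => (gpoly j).eval ((x : ℕ) : ℝ) * w (x : ℕ) with hG
  -- Step A : each term of the sum is a product of two determinants
  have hfm : ∀ i : Fin s, (fpoly i).Monic := fun i => prodlin_monic _ _
  have hfd : ∀ i : Fin s, (fpoly i).natDegree = (i : ℕ) := fun i => prodlin_natDegree _ _
  have hgm : ∀ i : Fin s, (gpoly i).Monic := fun i => prodlin_monic _ _
  have hgd : ∀ i : Fin s, (gpoly i).natDegree = (i : ℕ) := fun i => prodlin_natDegree _ _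
  have stepA : ∀ m : Fin s → Fin r,
      (∏ p ∈ Finset.univ.filter fun p : Fin s × Fin s => p.1 < p.2,
          (((m p.1 : ℕ) : ℝ) - ((m p.2 : ℕ) : ℝ)) ^ 2) *
        ∏ j : Fin s, (Nat.choose (q + (m j : ℕ)) q : ℝ) * (1 : ℝ) ^ ((m j : ℕ))
      = (Matrix.det (Matrix.of fun i j => F i (m j))) *
        (Matrix.det (Matrix.of fun i j => G i (m j))) := by
    intro m
    set v : Fin s → ℝ := fun j => ((m j : ℕ) : ℝ) with hv
    have hdetF : Matrix.det (Matrix.of fun i j => F i (m j))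
        = Matrix.det (Matrix.vandermonde v) := by
      have e1 : (Matrix.of fun i j => F i (m j))
          = (Matrix.of fun i j => (fpoly j).eval (v i))ᵀ := by
        ext i j; rfl
      rw [e1, Matrix.det_transpose, det_eval_monic fpoly hfm hfd v]
    have hdetG : Matrix.det (Matrix.of fun i j => G i (m j))
        = (∏ j : Fin s, w ((m j : ℕ))) * Matrix.det (Matrix.vandermonde v) := by
      have e1 : (Matrix.of fun i j => G i (m j))
          = Matrix.of (fun i j => (fun k : Fin s => w ((m k : ℕ))) j *
              (Matrix.of fun i j => (gpoly j).eval (v i))ᵀ i j) := by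
        ext i j
        simp only [Matrix.of_apply, Matrix.transpose_apply, hG]
        ring
      rw [e1, Matrix.det_mul_row, Matrix.det_transpose, det_eval_monic gpoly hgm hgd v]
    rw [hdetF, hdetG]
    have hsq : (Matrix.det (Matrix.vandermonde v)) * Matrix.det (Matrix.vandermonde v)
        = ∏ p ∈ Finset.univ.filter fun p : Fin s × Fin s => p.1 < p.2,
            (v p.1 - v p.2) ^ 2 := by
      rw [Matrix.det_vandermonde, prod_pairs (fun a b => (v a - v b) ^ 2)]
      rw [← Finset.prod_mul_distrib]
      refine Finset.prod_congr rfl fun i _ => ?_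
      rw [← Finset.prod_mul_distrib]
      exact Finset.prod_congr rfl fun j _ => by ring
    calc (∏ p ∈ Finset.univ.filter fun p : Fin s × Fin s => p.1 < p.2,
            (((m p.1 : ℕ) : ℝ) - ((m p.2 : ℕ) : ℝ)) ^ 2) *
          ∏ j : Fin s, (Nat.choose (q + (m j : ℕ)) q : ℝ) * (1 : ℝ) ^ ((m j : ℕ))
        = (∏ p ∈ Finset.univ.filter fun p : Fin s × Fin s => p.1 < p.2,
            (v p.1 - v p.2) ^ 2) * ∏ j : Fin s, w ((m j : ℕ)) := by
          congr 1
          exact Finset.prod_congr rfl fun j _ => by rw [one_pow, mul_one]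
      _ = _ := by rw [← hsq]; ring
  -- Step B : entries of the Gram matrix
  set M : Matrix (Fin s) (Fin s) ℝ :=
    Matrix.of (fun i j : Fin s => ∑ x : Fin r, F i x * G j x) with hM
  have hFval : ∀ (i : Fin s) (x : Fin r),
      F i x = (-1 : ℝ) ^ (i : ℕ) * (Nat.factorial (i : ℕ) : ℝ) *
        (Nat.choose (r - 1 - (x : ℕ)) (i : ℕ) : ℝ) := by
    intro i x
    have hxr := x.isLt
    have hx : (x : ℕ) ≤ r - 1 := by omega
    have hcast : (((r - 1 - (x : ℕ) : ℕ)) : ℝ) = (r : ℝ) - 1 - (x : ℕ) := by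
      have h1 : ((r - 1 - (x : ℕ) : ℕ)) = r - 1 - (x : ℕ) := rfl
      push_cast [Nat.cast_sub hx, Nat.cast_sub (show 1 ≤ r by omega)]
      ring
    have : F i x = ∏ u ∈ Finset.range (i : ℕ), (((x : ℕ) : ℝ) - ((r : ℝ) - 1 - u)) := by
      rw [hF]
      simp only [hfpoly, Polynomial.eval_prod, Polynomial.eval_add, Polynomial.eval_X,
        Polynomial.eval_C]
      exact Finset.prod_congr rfl fun u _ => by ring
    rw [this]
    have e2 : ∀ u ∈ Finset.range (i : ℕ),
        (((x : ℕ) : ℝ) - ((r : ℝ) - 1 - u)) = (-1) * ((((r - 1 - (x : ℕ) : ℕ)) : ℝ) - u) := by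
      intro u _
      rw [hcast]; ring
    rw [Finset.prod_congr rfl e2, Finset.prod_mul_distrib, Finset.prod_const,
      desc_prod (r - 1 - (x : ℕ)) (i : ℕ), Finset.card_range]
    ring
  have hGval : ∀ (j : Fin s) (x : Fin r),
      G j x = ((Nat.factorial (q + (j : ℕ)) : ℝ) / (Nat.factorial q : ℝ)) *
        (Nat.choose (q + (j : ℕ) + (x : ℕ)) (q + (j : ℕ)) : ℝ) := by
    intro j x
    have hb := asc_prod ((x : ℕ) + q) (j : ℕ)
    have e1 : G j x = (∏ u ∈ Finset.range (j : ℕ), ((((x : ℕ) + q : ℕ) : ℝ) + 1 + u)) * w (x : ℕ) := by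
      rw [hG]
      simp only [hgpoly, Polynomial.eval_prod, Polynomial.eval_add, Polynomial.eval_X,
        Polynomial.eval_C]
      refine congrArg (fun t => t * w ((x : ℕ))) ?_
      refine Finset.prod_congr rfl fun u _ => ?_
      push_cast
      ring
    rw [e1]
    have e2 : (∏ u ∈ Finset.range (j : ℕ), ((((x : ℕ) + q : ℕ) : ℝ) + 1 + u))
        = (Nat.factorial ((x : ℕ) + q + (j : ℕ)) : ℝ) / (Nat.factorial ((x : ℕ) + q) : ℝ) := by
      rw [eq_div_iff (facne _), hb]
    rw [e2]
    simp only [hw]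
    rw [Nat.cast_choose ℝ (show q ≤ q + (x : ℕ) from Nat.le_add_right _ _),
      Nat.cast_choose ℝ (show q + (j : ℕ) ≤ q + (j : ℕ) + (x : ℕ) from Nat.le_add_right _ _)]
    have e3 : q + (x : ℕ) - q = (x : ℕ) := by omega
    have e4 : q + (j : ℕ) + (x : ℕ) - (q + (j : ℕ)) = (x : ℕ) := by omega
    rw [e3, e4]
    have e5 : (x : ℕ) + q + (j : ℕ) = q + (j : ℕ) + (x : ℕ) := by omega
    have e6 : q + (x : ℕ) = (x : ℕ) + q := by omega
    rw [e5, e6]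
    field_simp
  set rowf : Fin s → ℝ := fun i => (-1 : ℝ) ^ (i : ℕ) * (Nat.factorial (i : ℕ) : ℝ) /
    ((Nat.factorial (r - 1 - (i : ℕ)) : ℝ) * (Nat.factorial (q + (i : ℕ) + s) : ℝ)) with hrowf
  set colf : Fin s → ℝ := fun j => ((Nat.factorial (q + (j : ℕ)) : ℝ) / (Nat.factorial q : ℝ)) *
    (Nat.factorial (q + (j : ℕ) + r) : ℝ) with hcolf
  set Ent : Fin s → Fin s → ℝ := fun i j =>
    (Nat.factorial (q + (i : ℕ) + s) : ℝ) / (Nat.factorial (q + (i : ℕ) + (j : ℕ) + 1) : ℝ) with hEnt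
  have hMval : ∀ i j : Fin s, M i j = rowf i * (colf j * Ent i j) := by
    intro i j
    have e1 : M i j = ∑ x : Fin r, F i x * G j x := rfl
    rw [e1]
    have e2 : ∀ x : Fin r, F i x * G j x
        = ((-1 : ℝ) ^ (i : ℕ) * (Nat.factorial (i : ℕ) : ℝ) *
            ((Nat.factorial (q + (j : ℕ)) : ℝ) / (Nat.factorial q : ℝ))) *
          ((Nat.choose (r - 1 - (x : ℕ)) (i : ℕ) : ℝ) *
            (Nat.choose (q + (j : ℕ) + (x : ℕ)) (q + (j : ℕ)) : ℝ)) := by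
      intro x
      rw [hFval i x, hGval j x]
      ring
    rw [Finset.sum_congr rfl fun x _ => e2 x, ← Finset.mul_sum]
    have e3 : ∑ x : Fin r, (Nat.choose (r - 1 - (x : ℕ)) (i : ℕ) : ℝ) *
        (Nat.choose (q + (j : ℕ) + (x : ℕ)) (q + (j : ℕ)) : ℝ)
        = ∑ x ∈ Finset.range r, (Nat.choose (r - 1 - x) (i : ℕ) : ℝ) *
            (Nat.choose (q + (j : ℕ) + x) (q + (j : ℕ)) : ℝ) :=
      Fin.sum_univ_eq_sum_range (fun x => (Nat.choose (r - 1 - x) (i : ℕ) : ℝ) *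
        (Nat.choose (q + (j : ℕ) + x) (q + (j : ℕ)) : ℝ)) r
    rw [e3, moment_real r q (i : ℕ) (j : ℕ) (by have := i.isLt; omega)]
    rw [hrowf, hcolf, hEnt]
    simp only
    field_simp
  -- Step C : determinant of M
  have detM : M.det = (∏ i, rowf i) * ((∏ j, colf j) * Matrix.det (Matrix.of Ent)) := by
    have e1 : M = Matrix.of (fun i j => rowf i * (Matrix.of fun i j => colf j * (Matrix.of Ent) i j) i j) := by
      ext i j
      simpa using hMval i j
    rw [e1, Matrix.det_mul_column, Matrix.det_mul_row]
  -- Step D : determinant of Ent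
  have hrev : ∀ k : Fin s, ((Fin.rev k : Fin s) : ℕ) = s - 1 - (k : ℕ) := by
    intro k
    simp [Fin.val_rev]
    omega
  have detEnt : Matrix.det (Matrix.of Ent)
      = ∏ j : Fin s, ((-1 : ℝ) ^ (j : ℕ) * (Nat.factorial (j : ℕ) : ℝ)) := by
    set p : Fin s → Polynomial ℝ := fun j =>
      ∏ u ∈ Finset.range (j : ℕ),
        (Polynomial.X + Polynomial.C ((q : ℝ) + ((Fin.rev j : Fin s) : ℕ) + 2 + u)) with hp
    set y : Fin s → ℝ := fun i => (((Fin.rev i : Fin s) : ℕ) : ℝ) with hy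
    have e0 : Matrix.det (Matrix.of Ent)
        = Matrix.det ((Matrix.of Ent).submatrix (Fin.revPerm : Equiv.Perm (Fin s)) Fin.revPerm) :=
      (Matrix.det_submatrix_equiv_self _ _).symm
    have e1 : (Matrix.of Ent).submatrix (Fin.revPerm : Equiv.Perm (Fin s)) Fin.revPerm
        = Matrix.of (fun i j => (p j).eval (y i)) := by
      ext i j
      simp only [Matrix.submatrix_apply, Matrix.of_apply, Fin.revPerm_apply, hEnt, hp, hy]
      rw [Polynomial.eval_prod]
      have e2 : ∀ u ∈ Finset.range ((j : ℕ)),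
          Polynomial.eval ((((Fin.rev i : Fin s) : ℕ)) : ℝ)
            (Polynomial.X + Polynomial.C ((q : ℝ) + ((Fin.rev j : Fin s) : ℕ) + 2 + u))
          = (((q + ((Fin.rev i : Fin s) : ℕ) + ((Fin.rev j : Fin s) : ℕ) + 1 : ℕ)) : ℝ) + 1 + u := by
        intro u _
        simp only [Polynomial.eval_add, Polynomial.eval_X, Polynomial.eval_C]
        push_cast
        ring
      rw [Finset.prod_congr rfl e2]
      have hb := asc_prod (q + ((Fin.rev i : Fin s) : ℕ) + ((Fin.rev j : Fin s) : ℕ) + 1) (j : ℕ)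
      have e3 : q + ((Fin.rev i : Fin s) : ℕ) + ((Fin.rev j : Fin s) : ℕ) + 1 + (j : ℕ)
          = q + ((Fin.rev i : Fin s) : ℕ) + s := by
        have h1 := hrev j
        have h2 : (j : ℕ) < s := j.isLt
        omega
      rw [e3] at hb
      rw [← hb]
      have e4 : q + ((Fin.rev i : Fin s) : ℕ) + ((Fin.rev j : Fin s) : ℕ) + 1
          = q + ((Fin.rev i : Fin s) : ℕ) + (Fin.rev j : Fin s) + 1 := rfl
      field_simp
    have pm : ∀ j : Fin s, (p j).Monic := fun j => prodlin_monic _ _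
    have pd : ∀ j : Fin s, (p j).natDegree = (j : ℕ) := fun j => prodlin_natDegree _ _
    rw [e0, e1, det_eval_monic p pm pd y, Matrix.det_vandermonde]
    have e5 : ∀ i : Fin s, ∀ j ∈ Finset.Ioi i, y j - y i = ((i : ℕ) : ℝ) - ((j : ℕ) : ℝ) := by
      intro i j hj
      rw [Finset.mem_Ioi] at hj
      have hij : (i : ℕ) < (j : ℕ) := hj
      rw [hy]
      simp only
      rw [hrev i, hrev j]
      have h1 : (j : ℕ) ≤ s - 1 := by have := j.isLt; omega
      have h2 : (i : ℕ) ≤ s - 1 := by have := i.isLt; omega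
      rw [Nat.cast_sub h1, Nat.cast_sub h2]
      push_cast [Nat.cast_sub (show 1 ≤ s by omega)]
      ring
    rw [Finset.prod_congr rfl fun i _ => Finset.prod_congr rfl (e5 i)]
    rw [← prod_pairs (fun a b => ((a : ℕ) : ℝ) - ((b : ℕ) : ℝ)),
      prod_pairs' (fun a b => ((a : ℕ) : ℝ) - ((b : ℕ) : ℝ))]
    refine Finset.prod_congr rfl fun j _ => ?_
    rw [Iio_val_prod j (fun u => ((u : ℕ) : ℝ) - ((j : ℕ) : ℝ))]
    exact neg_desc (j : ℕ)
  -- Step E : assemble everything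
  have hsum : (∑ m : Fin s → Fin r,
      (∏ p ∈ Finset.univ.filter fun p : Fin s × Fin s => p.1 < p.2,
          (((m p.1 : ℕ) : ℝ) - ((m p.2 : ℕ) : ℝ)) ^ 2) *
        ∏ j : Fin s, (Nat.choose (q + (m j : ℕ)) q : ℝ) * (1 : ℝ) ^ ((m j : ℕ)))
      = (Nat.factorial s : ℝ) * M.det := by
    rw [Finset.sum_congr rfl fun m _ => stepA m]
    exact andreief F G
  rw [coulombSum, hsum, detM, detEnt]
  have hR : (∏ i : Fin s, rowf i) = ∏ i ∈ Finset.range s,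
      ((-1 : ℝ) ^ i * (Nat.factorial i : ℝ) /
        ((Nat.factorial (r - 1 - i) : ℝ) * (Nat.factorial (q + i + s) : ℝ))) :=
    Fin.prod_univ_eq_prod_range (fun i => (-1 : ℝ) ^ i * (Nat.factorial i : ℝ) /
      ((Nat.factorial (r - 1 - i) : ℝ) * (Nat.factorial (q + i + s) : ℝ))) s
  have hC : (∏ j : Fin s, colf j) = ∏ j ∈ Finset.range s,
      ((Nat.factorial (q + j) : ℝ) / (Nat.factorial q : ℝ) * (Nat.factorial (q + j + r) : ℝ)) :=
    Fin.prod_univ_eq_prod_range (fun j => (Nat.factorial (q + j) : ℝ) / (Nat.factorial q : ℝ) *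
      (Nat.factorial (q + j + r) : ℝ)) s
  have hS : (∏ j : Fin s, ((-1 : ℝ) ^ (j : ℕ) * (Nat.factorial (j : ℕ) : ℝ)))
      = ∏ j ∈ Finset.range s, ((-1 : ℝ) ^ j * (Nat.factorial j : ℝ)) :=
    Fin.prod_univ_eq_prod_range (fun j => (-1 : ℝ) ^ j * (Nat.factorial j : ℝ)) s
  rw [hR, hC, hS]
  have cancel : ∀ X C : ℝ, 1 / (Nat.factorial s : ℝ) * C * ((Nat.factorial s : ℝ) * X) = C * X := by
    intro X C
    field_simp
  rw [cancel]
  rw [← Finset.prod_mul_distrib, ← Finset.prod_mul_distrib, ← Finset.prod_mul_distrib]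
  have perj : ∀ j ∈ Finset.range s,
      (Nat.factorial q : ℝ) / ((Nat.factorial j : ℝ) * (Nat.factorial (j + q) : ℝ)) *
        ((-1 : ℝ) ^ j * (Nat.factorial j : ℝ) /
          ((Nat.factorial (r - 1 - j) : ℝ) * (Nat.factorial (q + j + s) : ℝ)) *
        ((Nat.factorial (q + j) : ℝ) / (Nat.factorial q : ℝ) * (Nat.factorial (q + j + r) : ℝ) *
          ((-1 : ℝ) ^ j * (Nat.factorial j : ℝ))))
      = (Nat.factorial j : ℝ) * (Nat.factorial (j + q + r) : ℝ) /
          ((Nat.factorial (r - j - 1) : ℝ) * (Nat.factorial (j + q + s) : ℝ)) := by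
    intro j hj
    have e1 : q + j = j + q := by omega
    have e3 : r - 1 - j = r - j - 1 := by omega
    rw [e1, e3]
    have hsq : (-1 : ℝ) ^ j * (-1 : ℝ) ^ j = 1 := by
      rw [← pow_add]
      exact Even.neg_one_pow ⟨j, rfl⟩
    field_simp
    ring_nf
    rw [show ((-1 : ℝ)) ^ (j * 2) = 1 by rw [mul_comm j 2, pow_mul, neg_one_sq, one_pow]]
  rw [Finset.prod_congr rfl perj]
  -- final product identity
  have key : (∏ j ∈ Finset.range s, (Nat.factorial (2 * j + q) : ℝ) * (Nat.factorial (2 * j + q + 1) : ℝ))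
      = (∏ j ∈ Finset.range s, (Nat.factorial (j + q) : ℝ)) *
        ∏ j ∈ Finset.range s, (Nat.factorial (j + q + s) : ℝ) := by
    rw [factorial_prod_split s q]
    congr 1
    · exact Finset.prod_congr rfl fun j _ => by rw [show q + j = j + q by omega]
    · exact Finset.prod_congr rfl fun j _ => by rw [show q + s + j = j + q + s by omega]
  have key2 : (∏ j ∈ Finset.range s, (Nat.factorial (2 * j + q) : ℝ)) *
        (∏ j ∈ Finset.range s, (Nat.factorial (2 * j + q + 1) : ℝ))
      = (∏ j ∈ Finset.range s, (Nat.factorial (j + q) : ℝ)) *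
        ∏ j ∈ Finset.range s, (Nat.factorial (j + q + s) : ℝ) := by
    rw [← Finset.prod_mul_distrib]
    exact key
  have hne : ∀ f : ℕ → ℕ, (∏ j ∈ Finset.range s, (Nat.factorial (f j) : ℝ)) ≠ 0 :=
    fun f => Finset.prod_ne_zero_iff.mpr fun j _ => facne (f j)
  rw [Finset.prod_div_distrib, Finset.prod_div_distrib]
  rw [div_eq_div_iff
    (by rw [Finset.prod_mul_distrib]; exact mul_ne_zero (hne _) (hne _))
    (by rw [Finset.prod_mul_distrib, Finset.prod_mul_distrib]
        exact mul_ne_zero (mul_ne_zero (hne _) (hne _)) (hne _))]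
  have lhs_eq : (∏ j ∈ Finset.range s, (Nat.factorial j : ℝ) * (Nat.factorial (j + q + r) : ℝ)) *
      ∏ j ∈ Finset.range s, (Nat.factorial (r - j - 1) : ℝ) * (Nat.factorial (2 * j + q) : ℝ) *
        (Nat.factorial (2 * j + q + 1) : ℝ)
      = ((∏ j ∈ Finset.range s, (Nat.factorial j : ℝ)) *
          (∏ j ∈ Finset.range s, (Nat.factorial (j + q + r) : ℝ)) *
          (∏ j ∈ Finset.range s, (Nat.factorial (r - j - 1) : ℝ))) *
        ((∏ j ∈ Finset.range s, (Nat.factorial (2 * j + q) : ℝ)) *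
          (∏ j ∈ Finset.range s, (Nat.factorial (2 * j + q + 1) : ℝ))) := by
    simp only [Finset.prod_mul_distrib]
    ring
  have rhs_eq : (∏ j ∈ Finset.range s, (Nat.factorial j : ℝ) * (Nat.factorial (j + q) : ℝ) *
        (Nat.factorial (j + q + r) : ℝ)) *
      ∏ j ∈ Finset.range s, (Nat.factorial (r - j - 1) : ℝ) * (Nat.factorial (j + q + s) : ℝ)
      = ((∏ j ∈ Finset.range s, (Nat.factorial j : ℝ)) *
          (∏ j ∈ Finset.range s, (Nat.factorial (j + q + r) : ℝ)) *
          (∏ j ∈ Finset.range s, (Nat.factorial (r - j - 1) : ℝ))) *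
        ((∏ j ∈ Finset.range s, (Nat.factorial (j + q) : ℝ)) *
          (∏ j ∈ Finset.range s, (Nat.factorial (j + q + s) : ℝ))) := by
    simp only [Finset.prod_mul_distrib]
    ring
  rw [lhs_eq, rhs_eq, key2]
end

section
/- For all integers s, r, q with 1 ≤ s ≤ r and q ≥ 0, the discrete Coulomb-gas sum I_{r,s,q}(α), viewed as a polynomial in the variable α, has lowest-degree term exactly α^{s(s−1)/2} with coefficient 1; that is, the coefficient of α^k in I_{r,s,q}(α) vanishes for all k < s(s−1)/2, and the coefficient of α^{s(s−1)/2} equals 1. Equivalently, the emptiness formation probability F_{r,s,q}(α) = (1−α)^{s(s+q)} α^{−s(s−1)/2} I_{r,s,q}(α) tends to 1 as α → 0⁺. -/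
open Finset Polynomial Filter

/-- The discrete Coulomb-gas sum `I_{r,s,q}(α)`, viewed as a polynomial in `α`
(with rational coefficients). -/
noncomputable def coulombPoly (r s q : ℕ) : Polynomial ℚ :=
  Polynomial.C ((1 / (Nat.factorial s : ℚ)) *
      ∏ j ∈ Finset.range s,
        (Nat.factorial q : ℚ) / ((Nat.factorial j : ℚ) * (Nat.factorial (j + q) : ℚ))) *
    ∑ m : Fin s → Fin r,
      Polynomial.C
        ((∏ p ∈ Finset.univ.filter fun p : Fin s × Fin s => p.1 < p.2,
            (((m p.1 : ℕ) : ℚ) - ((m p.2 : ℕ) : ℚ)) ^ 2) *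
          ∏ j : Fin s, (Nat.choose (q + (m j : ℕ)) q : ℚ)) *
        Polynomial.X ^ (∑ j : Fin s, (m j : ℕ))

/-- The emptiness formation probability
`F_{r,s,q}(α) = (1−α)^{s(s+q)} α^{−s(s−1)/2} I_{r,s,q}(α)`. -/
noncomputable def efp (r s q : ℕ) (α : ℝ) : ℝ :=
  (1 - α) ^ (s * (s + q)) * coulombSum r s q α / α ^ (s * (s - 1) / 2)

/-!
Expanding the product of squared differences as the square of a Vandermonde determinant, the
coefficient of `α^k` in `I_{r,s,q}` is the normalizing constant times the sum, over configurations
`m` with `∑ m_j = k`, of `Δ(m)² ∏ C(q + m_j, q)`. The determinant `Δ(m)` vanishes unless the `m_j`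
are distinct, and `s` distinct naturals sum to at least `0 + 1 + ⋯ + (s-1) = s(s-1)/2`, with
equality only for the `s!` permutations of `{0, …, s-1}`. Each of these contributes
`(∏_{j<s} j!)² ∏_{j<s} C(q + j, q)`, which the prefactor cancels exactly, since
`C(j + q, q) q! j! = (j + q)!`. The limit of `F_{r,s,q}` follows: a polynomial whose coefficients
below `N` vanish behaves like its `N`-th coefficient times `α^N` at `0`.
-/

open Matrix Equiv Function Topology
open scoped Nat

namespace Matrix

variable {R : Type*} [CommRing R] {n : ℕ}

theorem prod_filter_lt_sub_sq_eq_det_vandermonde_sq (v : Fin n → R) :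
    ∏ p ∈ univ.filter (fun p : Fin n × Fin n => p.1 < p.2), (v p.1 - v p.2) ^ 2 =
      (vandermonde v).det ^ 2 := by
  rw [det_vandermonde, ← prod_pow, prod_filter, Fintype.prod_prod_type]
  refine prod_congr rfl fun i _ => ?_
  rw [← prod_pow, ← filter_lt_eq_Ioi, prod_filter]
  simp_rw [sub_sq_comm (v i)]

theorem det_vandermonde_comp_perm_sq (v : Fin n → R) (σ : Perm (Fin n)) :
    (vandermonde (v ∘ σ)).det ^ 2 = (vandermonde v).det ^ 2 := by
  rw [show vandermonde (v ∘ σ) = (vandermonde v).submatrix σ id from rfl, det_permute, mul_pow,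
    ← Int.cast_pow, ← Units.val_pow_eq_pow_val, Int.units_sq, Units.val_one, Int.cast_one, one_mul]

theorem det_vandermonde_val (n : ℕ) :
    (vandermonde fun i : Fin n => (i : R)).det = ∏ i ∈ range n, (i ! : R) := by
  cases n with
  | zero => simp
  | succ n =>
    rw [det_vandermonde_id_eq_superFactorial, ← Nat.prod_range_succ_factorial]
    push_cast
    rfl

end Matrix

section InjectiveSum

variable {s : ℕ} {f : Fin s → ℕ}

theorem Fin.val_le_of_strictMono (hf : StrictMono f) (i : Fin s) : (i : ℕ) ≤ f i :=
  calc (i : ℕ) = #(Iio i) := (Fin.card_Iio i).symm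
    _ ≤ #(Iio (f i)) := card_le_card_of_injOn f (fun j hj => by simpa using hf (by simpa using hj))
        hf.injective.injOn
    _ = f i := Nat.card_Iio _

theorem Fin.exists_perm_val_le_of_injective (hf : Injective f) :
    ∃ σ : Perm (Fin s), ∀ i : Fin s, (i : ℕ) ≤ f (σ i) :=
  ⟨Tuple.sort f, Fin.val_le_of_strictMono <|
    (Tuple.monotone_sort f).strictMono_of_injective (hf.comp (Equiv.injective _))⟩

theorem Fin.sum_univ_val (s : ℕ) : ∑ i : Fin s, (i : ℕ) = s * (s - 1) / 2 := by
  rw [Fin.sum_univ_eq_sum_range (fun i => i), sum_range_id]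

theorem Fin.sum_val_le_sum_of_injective (hf : Injective f) :
    ∑ i : Fin s, (i : ℕ) ≤ ∑ i, f i := by
  obtain ⟨σ, hσ⟩ := Fin.exists_perm_val_le_of_injective hf
  rw [← Equiv.sum_comp σ f]
  exact sum_le_sum fun i _ => hσ i

theorem Fin.exists_perm_eq_val_of_sum_eq_sum_val (hf : Injective f)
    (hsum : ∑ i, f i = ∑ i : Fin s, (i : ℕ)) : ∃ τ : Perm (Fin s), ∀ i, f i = τ i := by
  obtain ⟨σ, hσ⟩ := Fin.exists_perm_val_le_of_injective hf
  have heq : ∀ i ∈ (univ : Finset (Fin s)), (i : ℕ) = f (σ i) := by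
    rw [← sum_eq_sum_iff_of_le fun i _ => hσ i, Equiv.sum_comp σ f, hsum]
  exact ⟨σ.symm, fun i => by simpa using (heq (σ.symm i) (mem_univ _)).symm⟩

end InjectiveSum

theorem Polynomial.tendsto_eval_div_pow_of_coeff_eq_zero {K : Type*} [Field K]
    [TopologicalSpace K] [IsTopologicalSemiring K] {P : K[X]} {N : ℕ} (h : ∀ k < N, P.coeff k = 0) :
    Tendsto (fun x => P.eval x / x ^ N) (𝓝[≠] 0) (𝓝 (P.coeff N)) := by
  obtain ⟨Q, rfl⟩ := X_pow_dvd_iff.mpr h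
  have hQ : Tendsto (fun x => Q.eval x) (𝓝[≠] 0) (𝓝 ((X ^ N * Q).coeff N)) := by
    rw [coeff_X_pow_mul', if_pos le_rfl, Nat.sub_self, coeff_zero_eq_eval_zero]
    exact Q.continuous.continuousAt.tendsto.mono_left nhdsWithin_le_nhds
  refine hQ.congr' (eventually_nhdsWithin_of_forall fun x hx => ?_)
  dsimp only
  rw [eval_mul, eval_pow, eval_X, mul_div_cancel_left₀ _ (pow_ne_zero _ hx)]

/-- The summand of `I_{r,s,q}` at the configuration `m`, without its factor `α^{∑ m_j}`. -/
noncomputable def coulombWeight (q : ℕ) {s : ℕ} (m : Fin s → ℕ) : ℚ :=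
  (vandermonde fun j => (m j : ℚ)).det ^ 2 * ∏ j, ((q + m j).choose q : ℚ)

noncomputable def coulombNormalizer (s q : ℕ) : ℚ :=
  1 / s ! * ∏ j ∈ range s, (q ! : ℚ) / (j ! * (j + q)!)

section CoulombWeight

variable {s : ℕ} (q : ℕ)

theorem coulombWeight_eq_zero_of_not_injective {m : Fin s → ℕ} (hm : ¬ Injective m) :
    coulombWeight q m = 0 := by
  have hdet : (vandermonde fun j => (m j : ℚ)).det = 0 := by
    by_contra h
    exact hm ((Nat.cast_injective.of_comp_iff m).mp (det_vandermonde_ne_zero_iff.mp h))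
  simp [coulombWeight, hdet]

theorem coulombWeight_comp_perm (m : Fin s → ℕ) (σ : Perm (Fin s)) :
    coulombWeight q (m ∘ σ) = coulombWeight q m := by
  rw [coulombWeight, coulombWeight]
  congr 1
  · exact det_vandermonde_comp_perm_sq (fun j => (m j : ℚ)) σ
  · exact Equiv.prod_comp σ fun j => ((q + m j).choose q : ℚ)

theorem coulombWeight_val :
    coulombWeight q (fun i : Fin s => (i : ℕ)) =
      (∏ j ∈ range s, (j ! : ℚ)) ^ 2 * ∏ j ∈ range s, ((q + j).choose q : ℚ) := by
  rw [coulombWeight, det_vandermonde_val,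
    Fin.prod_univ_eq_prod_range (fun j => ((q + j).choose q : ℚ))]

theorem coulombNormalizer_mul_coulombWeight_val :
    coulombNormalizer s q * (s ! * coulombWeight q (fun i : Fin s => (i : ℕ))) = 1 := by
  have hfactor : ∀ j, (q ! : ℚ) / (j ! * (j + q)!) * ((j ! : ℚ) ^ 2 * ((q + j).choose q : ℚ)) = 1 :=
    fun j => by
      rw [← Nat.add_choose_mul_factorial_mul_factorial j q, add_comm q j]
      have := (Nat.choose_pos (Nat.le_add_left q j)).ne'
      push_cast
      field_simp
  have hs : (s ! : ℚ) ≠ 0 := by positivity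
  rw [coulombWeight_val, coulombNormalizer, ← prod_pow, mul_mul_mul_comm, one_div_mul_cancel hs,
    one_mul, ← prod_mul_distrib, ← prod_mul_distrib]
  exact prod_eq_one fun j _ => hfactor j

end CoulombWeight

theorem coeff_coulombPoly (r s q k : ℕ) :
    (coulombPoly r s q).coeff k = coulombNormalizer s q *
      ∑ m ∈ univ.filter (fun m : Fin s → Fin r => ∑ j, (m j : ℕ) = k),
        coulombWeight q (fun j => (m j : ℕ)) := by
  rw [coulombPoly, coeff_C_mul, finsetSum_coeff, sum_filter]
  congr 1
  refine sum_congr rfl fun m _ => ?_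
  rw [coeff_C_mul, coeff_X_pow, coulombWeight, prod_filter_lt_sub_sq_eq_det_vandermonde_sq
    (fun j => ((m j : ℕ) : ℚ))]
  split_ifs <;> simp_all [eq_comm]

theorem coeff_coulombPoly_of_lt (r q : ℕ) {s k : ℕ} (hk : k < s * (s - 1) / 2) :
    (coulombPoly r s q).coeff k = 0 := by
  rw [coeff_coulombPoly]
  refine mul_eq_zero_of_right _ (sum_eq_zero fun m hm => coulombWeight_eq_zero_of_not_injective q
    fun hinj => ?_)
  have hsum := Fin.sum_val_le_sum_of_injective hinj
  rw [Fin.sum_univ_val, (mem_filter.mp hm).2] at hsum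
  omega

theorem coeff_coulombPoly_lowest {r s : ℕ} (q : ℕ) (hsr : s ≤ r) :
    (coulombPoly r s q).coeff (s * (s - 1) / 2) = 1 := by
  have hsum : ∑ m ∈ univ.filter (fun m : Fin s → Fin r => ∑ j, (m j : ℕ) = s * (s - 1) / 2),
      coulombWeight q (fun j => (m j : ℕ)) =
        ∑ _σ : Perm (Fin s), coulombWeight q (fun i : Fin s => (i : ℕ)) := by
    symm
    refine sum_of_injOn (fun σ => Fin.castLE hsr ∘ σ) ?_ ?_ ?_ ?_
    · intro σ _ τ _ h
      exact Equiv.ext fun j => Fin.castLE_injective hsr (congrFun h j)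
    · intro σ _
      simp [Equiv.sum_comp σ (fun j : Fin s => (j : ℕ)), Fin.sum_univ_val]
    · intro m hm hnot
      refine coulombWeight_eq_zero_of_not_injective q fun hinj => hnot ?_
      obtain ⟨τ, hτ⟩ := Fin.exists_perm_eq_val_of_sum_eq_sum_val hinj
        ((mem_filter.mp hm).2.trans (Fin.sum_univ_val s).symm)
      exact ⟨τ, mem_coe.mpr (mem_univ _), funext fun j => Fin.ext (hτ j).symm⟩
    · intro σ _
      exact (coulombWeight_comp_perm q _ σ).symm
  rw [coeff_coulombPoly, hsum, sum_const, Finset.card_univ, Fintype.card_perm, Fintype.card_fin,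
    nsmul_eq_mul]
  exact coulombNormalizer_mul_coulombWeight_val q

theorem coulombSum_eq_eval_map (r s q : ℕ) (α : ℝ) :
    coulombSum r s q α = ((coulombPoly r s q).map (algebraMap ℚ ℝ)).eval α := by
  simp only [coulombSum, coulombPoly, eval_map, eval₂_mul, eval₂_C, eval₂_finsetSum, eval₂_X_pow,
    prod_mul_distrib, prod_pow_eq_pow_sum]
  congr 1
  · push_cast; rfl
  · refine sum_congr rfl fun m _ => ?_
    push_cast
    ring

theorem coulombSum_lowest_order_general (s r q : ℕ) (hsr : s ≤ r) :
    (∀ k < s * (s - 1) / 2, (coulombPoly r s q).coeff k = 0) ∧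
    (coulombPoly r s q).coeff (s * (s - 1) / 2) = 1 ∧
    Tendsto (fun α : ℝ => efp r s q α) (nhdsWithin 0 (Set.Ioi 0)) (nhds 1) := by
  have hlow : ∀ k < s * (s - 1) / 2, (coulombPoly r s q).coeff k = 0 :=
    fun k hk => coeff_coulombPoly_of_lt r q hk
  have hone := coeff_coulombPoly_lowest q hsr
  refine ⟨hlow, hone, ?_⟩
  have hI : Tendsto (fun α => coulombSum r s q α / α ^ (s * (s - 1) / 2)) (𝓝[≠] 0) (𝓝 1) := by
    simpa [coulombSum_eq_eval_map, hone] using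
      tendsto_eval_div_pow_of_coeff_eq_zero (P := (coulombPoly r s q).map (algebraMap ℚ ℝ))
        (N := s * (s - 1) / 2) fun k hk => by simp [hlow k hk]
  have hfactor : Tendsto (fun α : ℝ => (1 - α) ^ (s * (s + q))) (𝓝[>] 0) (𝓝 1) := by
    simpa using (((tendsto_const_nhds (x := (1 : ℝ))).sub tendsto_id).pow (s * (s + q))).mono_left
      (nhdsWithin_le_nhds (a := (0 : ℝ)) (s := Set.Ioi 0))
  simpa only [efp, mul_div_assoc, mul_one] using
    hfactor.mul (hI.mono_left (nhdsWithin_mono _ fun _ h => ne_of_gt h))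

/-- the lowest-degree term of `I_{r,s,q}(α)` as a polynomial in `α` is
exactly `α^{s(s−1)/2}` with coefficient 1; equivalently,
`F_{r,s,q}(α) → 1` as `α → 0⁺`. -/
theorem coulombSum_lowest_order (s r q : ℕ) (hs : 1 ≤ s) (hsr : s ≤ r) :
    (∀ k < s * (s - 1) / 2, (coulombPoly r s q).coeff k = 0) ∧
    (coulombPoly r s q).coeff (s * (s - 1) / 2) = 1 ∧
    Tendsto (fun α : ℝ => efp r s q α) (nhdsWithin 0 (Set.Ioi 0)) (nhds 1) :=
  coulombSum_lowest_order_general s r q hsr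
end

section
/- Let x, y be real numbers with 0 < y ≤ x and x + y < 1. For each positive integer N set s_N = ⌊yN⌋, q_N = ⌊xN⌋ − ⌊yN⌋, r_N = N − ⌊xN⌋. Then the limit lim_{N→∞} −(1/N²) · log( ∏_{j=0}^{s_N−1} j! · (j+q_N)! · (j+q_N+r_N)! / ( (r_N−j−1)! · (2j+q_N)! · (2j+q_N+1)! ) ) exists and equals ψ(x,y) = ((x+y)²/2) log(x+y) − ((1−x−y)²/2) log(1−x−y) − (x²/2) log x + ((1−x)²/2) log(1−x) − (y²/2) log y + ((1−y)²/2) log(1−y). -/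
/-!
Taking logarithms, the product telescopes into a signed sum of seven values of
`L(m) = ∑_{j<m} log j!`, at `m = s, a, N, N - a - s` (plus) and `N - s, N - a, a + s` (minus),
where `s = ⌊yN⌋` and `a = ⌊xN⌋`. Summing Stirling's `log k! = k log k - k + o(k)` gives
`L(m) = m²/2 (log m - 3/2) + o(m²)`. With `m ≈ cN` each term contributes
`(cN)²/2 (log c + log N - 3/2)`; the coefficients of `N² log N` and `N²` cancel because the
signed sum of the squares of the seven arguments vanishes identically, and what is left is
`-ψ(x, y) N²`.
-/

open Finset Filter Real
open Asymptotics Topology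
open scoped Nat

theorem isLittleO_log_natCast : (fun n : ℕ => log (n : ℝ)) =o[atTop] fun n => (n : ℝ) :=
  isLittleO_log_id_atTop.comp_tendsto tendsto_natCast_atTop_atTop

theorem isLittleO_const_natCast (c : ℝ) : (fun _ : ℕ => c) =o[atTop] fun n => (n : ℝ) :=
  isLittleO_const_left.2 <| Or.inr <| tendsto_norm_atTop_atTop.comp tendsto_natCast_atTop_atTop

theorem tendsto_natCast_div_self : Tendsto (fun N : ℕ => (N : ℝ) / N) atTop (𝓝 1) :=
  tendsto_const_nhds.congr' <| by
    filter_upwards [eventually_ne_atTop 0] with N hN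
    exact (div_self (Nat.cast_ne_zero.2 hN)).symm

theorem isLittleO_sub_zero_sq_of_succ_sub {E : Type*} [NormedAddCommGroup E]
    {f : ℕ → E} (h : (fun k => f (k + 1) - f k) =o[atTop] fun k => (k : ℝ)) :
    (fun n => f n - f 0) =o[atTop] fun n => (n : ℝ) ^ 2 := by
  have sum_odd : ∀ n : ℕ, ∑ k ∈ range n, (2 * (k : ℝ) + 1) = (n : ℝ) ^ 2 := by
    intro n
    induction n with
    | zero => simp
    | succ n ih => rw [sum_range_succ, ih]; push_cast; ring
  have h' : (fun k => f (k + 1) - f k) =o[atTop] fun k => 2 * (k : ℝ) + 1 :=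
    h.trans_isBigO <| IsBigO.of_bound 1 <| Eventually.of_forall fun k => by
      rw [one_mul, Real.norm_of_nonneg (by positivity), Real.norm_of_nonneg (by positivity)]
      linarith [(k.cast_nonneg : (0 : ℝ) ≤ k)]
  have hsum := h'.sum_range (fun k => by positivity) <| by
    simp_rw [sum_odd]
    exact (tendsto_pow_atTop two_ne_zero).comp tendsto_natCast_atTop_atTop
  simpa only [sum_range_sub, sum_odd] using hsum

theorem isLittleO_log_factorial_sub :
    (fun n : ℕ => log (n ! : ℝ) - (n * log n - n)) =o[atTop] fun n => (n : ℝ) := by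
  have hstirling : (fun n => log (Stirling.stirlingSeq n)) =o[atTop] fun n => (n : ℝ) :=
    ((Stirling.tendsto_stirlingSeq_sqrt_pi.log (by positivity)).isBigO_one ℝ).trans_isLittleO
      (isLittleO_const_natCast 1)
  have hlog : (fun n : ℕ => log 2 + log (n : ℝ)) =o[atTop] fun n => (n : ℝ) :=
    (isLittleO_const_natCast _).add isLittleO_log_natCast
  refine (hstirling.add (hlog.const_mul_left (1 / 2))).congr' ?_ EventuallyEq.rfl
  filter_upwards [eventually_ne_atTop 0] with n hn
  have hn' : (n : ℝ) ≠ 0 := Nat.cast_ne_zero.2 hn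
  rw [Stirling.log_stirlingSeq_formula, log_mul two_ne_zero hn', log_div hn' (exp_ne_zero 1),
    log_exp]
  ring

theorem abs_sq_mul_log_succ_sub_le {t : ℝ} (ht : 1 ≤ t) :
    |((t + 1) ^ 2 / 2 * (log (t + 1) - 3 / 2) - t ^ 2 / 2 * (log t - 3 / 2))
      - (t * log t - t) - log t / 2| ≤ 1 := by
  have ht0 : 0 < t := by linarith
  set L := log (t + 1) - log t with hL
  have hLdiv : L = log ((t + 1) / t) := by rw [log_div (by linarith) ht0.ne']
  have hL_le : t * L ≤ 1 := by
    have := log_le_sub_one_of_pos (show 0 < (t + 1) / t by positivity)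
    rw [← hLdiv, div_sub_one ht0.ne', add_sub_cancel_left, le_div_iff₀ ht0] at this
    linarith
  have hL_ge : 1 ≤ (t + 1) * L := by
    have := one_sub_inv_le_log_of_pos (show 0 < (t + 1) / t by positivity)
    rw [← hLdiv, inv_div, one_sub_div (by linarith), add_sub_cancel_left,
      div_le_iff₀ (by linarith)] at this
    linarith
  have key : ((t + 1) ^ 2 / 2 * (log (t + 1) - 3 / 2) - t ^ 2 / 2 * (log t - 3 / 2))
      - (t * log t - t) - log t / 2 = (t + 1) ^ 2 * L / 2 - t / 2 - 3 / 4 := by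
    rw [hL]; ring
  rw [key, abs_le]
  constructor <;> nlinarith

noncomputable def sumLogFactorial (m : ℕ) : ℝ := ∑ j ∈ range m, log (j ! : ℝ)

theorem sumLogFactorial_succ (m : ℕ) :
    sumLogFactorial (m + 1) = sumLogFactorial m + log (m ! : ℝ) :=
  sum_range_succ _ _

theorem isLittleO_sumLogFactorial_sub :
    (fun m : ℕ => sumLogFactorial m - (m : ℝ) ^ 2 / 2 * (log m - 3 / 2)) =o[atTop]
      fun m => (m : ℝ) ^ 2 := by
  have hlog : (fun k : ℕ => log (k : ℝ) / 2) =o[atTop] fun k => (k : ℝ) := by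
    simpa [div_eq_mul_inv, mul_comm] using isLittleO_log_natCast.const_mul_left (1 / 2)
  have hbounded : (fun k : ℕ => ((k + 1 : ℝ) ^ 2 / 2 * (log (k + 1 : ℝ) - 3 / 2)
      - (k : ℝ) ^ 2 / 2 * (log k - 3 / 2)) - (k * log k - k) - log k / 2) =o[atTop]
        fun k => (k : ℝ) := by
    refine IsBigO.trans_isLittleO (g := fun _ => (1 : ℝ)) ?_ (isLittleO_const_natCast 1)
    refine IsBigO.of_bound 1 ?_
    filter_upwards [eventually_ge_atTop 1] with k hk
    simpa using abs_sq_mul_log_succ_sub_le (t := k) (by exact_mod_cast hk)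
  -- The increment of the error term at `k` is `(log k! - (k log k - k)) - O(1) - log k / 2`.
  have h := (isLittleO_log_factorial_sub.sub hbounded).sub hlog
  have hsucc := isLittleO_sub_zero_sq_of_succ_sub
    (f := fun m : ℕ => sumLogFactorial m - (m : ℝ) ^ 2 / 2 * (log m - 3 / 2))
    (h.congr (fun k => by simp only [sumLogFactorial_succ, Nat.cast_succ]; ring) fun _ => rfl)
  simpa [sumLogFactorial] using hsucc

theorem sum_range_log_factorial_add (b n : ℕ) :
    ∑ j ∈ range n, log ((j + b)! : ℝ) = sumLogFactorial (b + n) - sumLogFactorial b := by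
  simp only [sumLogFactorial, sum_range_add, add_comm]
  ring

theorem sum_range_log_factorial_sub (r : ℕ) {s : ℕ} (hs : s ≤ r) :
    ∑ j ∈ range s, log ((r - j - 1)! : ℝ) = sumLogFactorial r - sumLogFactorial (r - s) := by
  induction s with
  | zero => simp
  | succ s ih =>
    have hsplit : sumLogFactorial (r - s) =
        sumLogFactorial (r - s - 1) + log ((r - s - 1)! : ℝ) := by
      rw [← sumLogFactorial_succ]
      congr 1
      omega
    rw [sum_range_succ, ih (by omega), hsplit, Nat.sub_sub]
    ring

theorem sum_range_log_factorial_two_mul_add (q s : ℕ) :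
    ∑ j ∈ range s, (log ((2 * j + q)! : ℝ) + log ((2 * j + q + 1)! : ℝ)) =
      sumLogFactorial (q + 2 * s) - sumLogFactorial q := by
  induction s with
  | zero => simp
  | succ s ih =>
    rw [sum_range_succ, ih, show q + 2 * (s + 1) = q + 2 * s + 1 + 1 by ring,
      sumLogFactorial_succ, sumLogFactorial_succ, show 2 * s + q = q + 2 * s by ring]
    ring

noncomputable def factorialRatioProd (s q r : ℕ) : ℝ :=
  ∏ j ∈ range s, ((j ! : ℝ) * ((j + q)! : ℝ) * ((j + q + r)! : ℝ)) /
    (((r - j - 1)! : ℝ) * ((2 * j + q)! : ℝ) * ((2 * j + q + 1)! : ℝ))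

theorem log_factorialRatioProd {s r : ℕ} (q : ℕ) (hs : s ≤ r) :
    log (factorialRatioProd s q r) =
      sumLogFactorial s + sumLogFactorial (q + s) + sumLogFactorial (q + r + s)
        + sumLogFactorial (r - s) - sumLogFactorial (q + r) - sumLogFactorial r
        - sumLogFactorial (q + 2 * s) := by
  rw [factorialRatioProd, log_prod fun j _ => by positivity]
  have hterm : ∀ j, log (((j ! : ℝ) * ((j + q)! : ℝ) * ((j + q + r)! : ℝ)) /
      (((r - j - 1)! : ℝ) * ((2 * j + q)! : ℝ) * ((2 * j + q + 1)! : ℝ))) =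
      log (j ! : ℝ) + log ((j + q)! : ℝ) + log ((j + (q + r))! : ℝ) - log ((r - j - 1)! : ℝ)
        - (log ((2 * j + q)! : ℝ) + log ((2 * j + q + 1)! : ℝ)) := fun j => by
    rw [log_div (by positivity) (by positivity), log_mul (by positivity) (by positivity),
      log_mul (by positivity) (by positivity), log_mul (by positivity) (by positivity),
      log_mul (by positivity) (by positivity), add_assoc j q r]
    ring
  rw [sum_congr rfl fun j _ => hterm j, sum_sub_distrib, sum_range_log_factorial_two_mul_add,
    sum_sub_distrib, sum_add_distrib, sum_add_distrib, sum_range_log_factorial_add,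
    sum_range_log_factorial_add, sum_range_log_factorial_sub r hs]
  rw [show ∑ j ∈ range s, log (j ! : ℝ) = sumLogFactorial s from rfl]
  ring

theorem tendsto_sumLogFactorial_div_sq {m : ℕ → ℕ} {c : ℝ} (hc : 0 < c)
    (hm : Tendsto (fun N : ℕ => (m N : ℝ) / N) atTop (𝓝 c)) :
    Tendsto (fun N : ℕ =>
        (sumLogFactorial (m N) - (m N : ℝ) ^ 2 / 2 * (log N - 3 / 2)) / (N : ℝ) ^ 2)
      atTop (𝓝 (c ^ 2 / 2 * log c)) := by
  have hm_top : Tendsto m atTop atTop := by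
    refine tendsto_natCast_atTop_iff.1 <|
      (hm.pos_mul_atTop hc tendsto_natCast_atTop_atTop).congr' ?_
    filter_upwards [eventually_ne_atTop 0] with N hN
    exact div_mul_cancel₀ _ (Nat.cast_ne_zero.2 hN)
  have herr := (isLittleO_sumLogFactorial_sub.tendsto_div_nhds_zero).comp hm_top
  have hlim := (herr.mul (hm.pow 2)).add (((hm.pow 2).div_const 2).mul (hm.log hc.ne'))
  rw [zero_mul, zero_add] at hlim
  refine hlim.congr' ?_
  filter_upwards [eventually_ne_atTop 0, hm_top.eventually_ne_atTop 0] with N hN hmN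
  have hN' : (N : ℝ) ≠ 0 := Nat.cast_ne_zero.2 hN
  have hmN' : (m N : ℝ) ≠ 0 := Nat.cast_ne_zero.2 hmN
  simp only [Function.comp_apply]
  rw [log_div hmN' hN']
  field_simp
  ring

theorem Filter.Tendsto.natCast_sub_div {a b : ℕ → ℕ} {α β : ℝ} (hba : ∀ N, b N ≤ a N)
    (ha : Tendsto (fun N : ℕ => (a N : ℝ) / N) atTop (𝓝 α))
    (hb : Tendsto (fun N : ℕ => (b N : ℝ) / N) atTop (𝓝 β)) :
    Tendsto (fun N : ℕ => ((a N - b N : ℕ) : ℝ) / N) atTop (𝓝 (α - β)) :=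
  (ha.sub hb).congr fun N => by rw [Nat.cast_sub (hba N), sub_div]

theorem tendsto_log_factorialRatioProd_div_sq {s q r : ℕ → ℕ} {σ κ ρ : ℝ}
    (hsr : ∀ N, s N ≤ r N) (hσ : 0 < σ) (hσρ : σ < ρ)
    (hs : Tendsto (fun N : ℕ => (s N : ℝ) / N) atTop (𝓝 σ))
    (hq : Tendsto (fun N : ℕ => (q N : ℝ) / N) atTop (𝓝 κ))
    (hr : Tendsto (fun N : ℕ => (r N : ℝ) / N) atTop (𝓝 ρ)) :
    Tendsto (fun N : ℕ => log (factorialRatioProd (s N) (q N) (r N)) / (N : ℝ) ^ 2) atTop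
      (𝓝 (σ ^ 2 / 2 * log σ + (κ + σ) ^ 2 / 2 * log (κ + σ)
        + (κ + ρ + σ) ^ 2 / 2 * log (κ + ρ + σ) + (ρ - σ) ^ 2 / 2 * log (ρ - σ)
        - (κ + ρ) ^ 2 / 2 * log (κ + ρ) - ρ ^ 2 / 2 * log ρ
        - (κ + 2 * σ) ^ 2 / 2 * log (κ + 2 * σ))) := by
  have hκ : 0 ≤ κ := ge_of_tendsto' hq fun N => by positivity
  have h₁ := tendsto_sumLogFactorial_div_sq hσ hs
  have h₂ := tendsto_sumLogFactorial_div_sq (m := fun N => q N + s N) (by linarith)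
    ((hq.add hs).congr fun N => by push_cast; ring)
  have h₃ := tendsto_sumLogFactorial_div_sq (m := fun N => q N + r N + s N) (by linarith)
    (((hq.add hr).add hs).congr fun N => by push_cast; ring)
  have h₄ := tendsto_sumLogFactorial_div_sq (sub_pos.2 hσρ) (hr.natCast_sub_div hsr hs)
  have h₅ := tendsto_sumLogFactorial_div_sq (m := fun N => q N + r N) (by linarith)
    ((hq.add hr).congr fun N => by push_cast; ring)
  have h₆ := tendsto_sumLogFactorial_div_sq (by linarith) hr
  have h₇ := tendsto_sumLogFactorial_div_sq (m := fun N => q N + 2 * s N) (by linarith)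
    ((hq.add (hs.const_mul 2)).congr fun N => by push_cast; ring)
  refine ((((((h₁.add h₂).add h₃).add h₄).sub h₅).sub h₆).sub h₇).congr fun N => ?_
  -- The signed squares of the seven arguments sum to zero, so the `log N` terms cancel.
  rw [log_factorialRatioProd (q N) (hsr N)]
  push_cast [Nat.cast_sub (hsr N)]
  ring

/-- Stirling-type asymptotics: for `0 < y ≤ x`, `x + y < 1`, with
`s_N = ⌊yN⌋`, `q_N = ⌊xN⌋ − ⌊yN⌋`, `r_N = N − ⌊xN⌋`, the limit
`lim_{N→∞} −(1/N²) log ∏_{j=0}^{s_N−1} j!(j+q_N)!(j+q_N+r_N)! /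
((r_N−j−1)!(2j+q_N)!(2j+q_N+1)!)` exists and equals
`ψ(x,y) = ((x+y)²/2)log(x+y) − ((1−x−y)²/2)log(1−x−y) − (x²/2)log x
+ ((1−x)²/2)log(1−x) − (y²/2)log y + ((1−y)²/2)log(1−y)`. -/
theorem psi_limit (x y : ℝ) (hy : 0 < y) (hyx : y ≤ x) (hxy : x + y < 1) :
    Tendsto
      (fun N : ℕ =>
        -(1 / (N : ℝ) ^ 2) *
          Real.log (∏ j ∈ Finset.range (Nat.floor (y * N)),
            ((Nat.factorial j : ℝ) *
                (Nat.factorial (j + (Nat.floor (x * N) - Nat.floor (y * N))) : ℝ) *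
                (Nat.factorial (j + (Nat.floor (x * N) - Nat.floor (y * N)) +
                  (N - Nat.floor (x * N))) : ℝ)) /
              ((Nat.factorial ((N - Nat.floor (x * N)) - j - 1) : ℝ) *
                (Nat.factorial (2 * j + (Nat.floor (x * N) - Nat.floor (y * N))) : ℝ) *
                (Nat.factorial (2 * j + (Nat.floor (x * N) - Nat.floor (y * N)) + 1) : ℝ))))
      atTop
      (nhds ((x + y) ^ 2 / 2 * Real.log (x + y)
        - (1 - x - y) ^ 2 / 2 * Real.log (1 - x - y)
        - x ^ 2 / 2 * Real.log x
        + (1 - x) ^ 2 / 2 * Real.log (1 - x)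
        - y ^ 2 / 2 * Real.log y
        + (1 - y) ^ 2 / 2 * Real.log (1 - y))) := by
  have hx : 0 < x := hy.trans_le hyx
  have hfloor {c : ℝ} (hc : 0 ≤ c) :
      Tendsto (fun N : ℕ => (⌊c * N⌋₊ : ℝ) / N) atTop (𝓝 c) :=
    (tendsto_nat_floor_mul_div_atTop hc).comp tendsto_natCast_atTop_atTop
  have hfloor_add (N : ℕ) : ⌊x * N⌋₊ + ⌊y * N⌋₊ ≤ N := by
    have := Nat.floor_le (mul_nonneg hx.le N.cast_nonneg)
    have := Nat.floor_le (mul_nonneg hy.le N.cast_nonneg)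
    have : (⌊x * N⌋₊ + ⌊y * N⌋₊ : ℝ) ≤ N := by nlinarith [N.cast_nonneg (α := ℝ)]
    exact_mod_cast this
  have hq := (hfloor hx.le).natCast_sub_div
    (fun N => Nat.floor_le_floor (mul_le_mul_of_nonneg_right hyx N.cast_nonneg)) (hfloor hy.le)
  have hr := tendsto_natCast_div_self.natCast_sub_div
    (fun N => by linarith [hfloor_add N]) (hfloor hx.le)
  have hlim := (tendsto_log_factorialRatioProd_div_sq (fun N => by have := hfloor_add N; omega)
    hy (by linarith) (hfloor hy.le) hq hr).neg
  change Tendsto (fun N : ℕ => -(1 / (N : ℝ) ^ 2) *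
    log (factorialRatioProd ⌊y * N⌋₊ (⌊x * N⌋₊ - ⌊y * N⌋₊) (N - ⌊x * N⌋₊))) atTop _
  convert hlim using 2 with N
  · ring
  · rw [show x - y + y = x by ring, show x - y + (1 - x) + y = 1 by ring,
      show x - y + (1 - x) = 1 - y by ring, show x - y + 2 * y = x + y by ring, log_one]
    ring
end

section
/- Let x, y be real numbers with 0 < y, 0 < x, x + y < 1, and set h = √(xy/((1−x)(1−y))). Then χ₀(x,y) = χ(x,y; h), where χ(x,y;η) := −xy·log η + ((1−x−y)²/2)·log(1−η) + (1/2)·log(1+η) − (1−x)y·log(y+(1−x)η) − x(1−y)·log(x+(1−y)η) + x(1−x)·log(x+(1−x)η) + y(1−y)·log(y+(1−y)η) + ((x−y)²/2)·log(x+y+(2−x−y)η), and χ₀(x,y) := −(x²/2)·log x − ((1−x)²/2)·log(1−x) − (y²/2)·log y − ((1−y)²/2)·log(1−y) + ((1−x−y)²/2)·log(1−x−y). -/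
/-- The η-dependent part of the Regime II free energy:
`χ(x,y;η) = −xy log η + ((1−x−y)²/2) log(1−η) + (1/2) log(1+η)
− (1−x)y log(y+(1−x)η) − x(1−y) log(x+(1−y)η) + x(1−x) log(x+(1−x)η)
+ y(1−y) log(y+(1−y)η) + ((x−y)²/2) log(x+y+(2−x−y)η)`. -/
noncomputable def chi (x y η : ℝ) : ℝ :=
  -(x * y) * Real.log η
    + (1 - x - y) ^ 2 / 2 * Real.log (1 - η)
    + 1 / 2 * Real.log (1 + η)
    - (1 - x) * y * Real.log (y + (1 - x) * η)
    - x * (1 - y) * Real.log (x + (1 - y) * η)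
    + x * (1 - x) * Real.log (x + (1 - x) * η)
    + y * (1 - y) * Real.log (y + (1 - y) * η)
    + (x - y) ^ 2 / 2 * Real.log (x + y + (2 - x - y) * η)

/-- The α-independent integration constant:
`χ₀(x,y) = −(x²/2) log x − ((1−x)²/2) log(1−x) − (y²/2) log y
− ((1−y)²/2) log(1−y) + ((1−x−y)²/2) log(1−x−y)`. -/
noncomputable def chiZero (x y : ℝ) : ℝ :=
  -(x ^ 2 / 2) * Real.log x
    - (1 - x) ^ 2 / 2 * Real.log (1 - x)
    - y ^ 2 / 2 * Real.log y
    - (1 - y) ^ 2 / 2 * Real.log (1 - y)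
    + (1 - x - y) ^ 2 / 2 * Real.log (1 - x - y)

/-- `χ₀(x,y) = χ(x,y;h)` with `h = √(xy/((1−x)(1−y)))`. -/
theorem chiZero_eq_chi_at_h (x y : ℝ) (hx : 0 < x) (hy : 0 < y) (hxy : x + y < 1) :
    chiZero x y = chi x y (Real.sqrt (x * y / ((1 - x) * (1 - y)))) := by
  have hx1 : x < 1 := by linarith
  have hy1 : y < 1 := by linarith
  set u := Real.sqrt x with hudef
  set v := Real.sqrt y with hvdef
  set p := Real.sqrt (1 - x) with hpdef
  set q := Real.sqrt (1 - y) with hqdef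
  have hu0 : 0 < u := Real.sqrt_pos.mpr hx
  have hv0 : 0 < v := Real.sqrt_pos.mpr hy
  have hp0 : 0 < p := Real.sqrt_pos.mpr (by linarith)
  have hq0 : 0 < q := Real.sqrt_pos.mpr (by linarith)
  have hu2 : u ^ 2 = x := Real.sq_sqrt hx.le
  have hv2 : v ^ 2 = y := Real.sq_sqrt hy.le
  have hp2 : p ^ 2 = 1 - x := Real.sq_sqrt (by linarith)
  have hq2 : q ^ 2 = 1 - y := Real.sq_sqrt (by linarith)
  have hpu : p ^ 2 + u ^ 2 = 1 := by rw [hp2, hu2]; ring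
  have hqv : q ^ 2 + v ^ 2 = 1 := by rw [hq2, hv2]; ring
  have hs : Real.sqrt (x * y / ((1 - x) * (1 - y))) = u * v / (p * q) := by
    rw [Real.sqrt_div (by positivity), Real.sqrt_mul hx.le,
      Real.sqrt_mul (by linarith : (0:ℝ) ≤ 1 - x)]
  rw [hs]
  have hD : (1 : ℝ) - x - y = (p * q - u * v) * (p * q + u * v) := by
    linear_combination (-(q ^ 2)) * hp2 + (-(1 - x)) * hq2 + v ^ 2 * hu2 + x * hv2
  have hC0 : 0 < p * q + u * v := by positivity
  have hDm0 : 0 < p * q - u * v := by nlinarith [hD, hC0, hxy]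
  have hB0 : 0 < u * q + p * v := by positivity
  -- key factorization
  have hA : v * q + p * u = (u * q + p * v) * (p * q + u * v) := by
    linear_combination (-(u * p)) * hqv + (-(v * q)) * hpu
  -- rewrite the arguments
  have e2 : 1 - u * v / (p * q) = (p * q - u * v) / (p * q) := by
    field_simp
  have e3 : 1 + u * v / (p * q) = (p * q + u * v) / (p * q) := by
    field_simp
  have e4 : y + (1 - x) * (u * v / (p * q)) = v * ((u * q + p * v) * (p * q + u * v)) / q := by
    rw [← hA, ← hv2, ← hp2]; field_simp
  have e5 : x + (1 - y) * (u * v / (p * q)) = u * ((u * q + p * v) * (p * q + u * v)) / p := by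
    rw [← hA, ← hu2, ← hq2]; field_simp; ring
  have e6 : x + (1 - x) * (u * v / (p * q)) = u * (u * q + p * v) / q := by
    rw [← hp2, ← hu2]; field_simp
  have e7 : y + (1 - y) * (u * v / (p * q)) = v * (u * q + p * v) / p := by
    rw [← hq2, ← hv2]; field_simp; ring
  have e8 : x + y + (2 - x - y) * (u * v / (p * q))
      = (v * q + p * u) * (u * q + p * v) / (p * q) := by
    have h2 : 2 - x - y = p ^ 2 + q ^ 2 := by linear_combination -hp2 - hq2
    rw [h2, ← hu2, ← hv2]; field_simp; ring
  rw [hA] at e8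
  -- log expansions
  have Ls : Real.log (u * v / (p * q))
      = Real.log u + Real.log v - Real.log p - Real.log q := by
    rw [Real.log_div (by positivity) (by positivity), Real.log_mul hu0.ne' hv0.ne',
      Real.log_mul hp0.ne' hq0.ne']
    ring
  have L2 : Real.log ((p * q - u * v) / (p * q))
      = Real.log (p * q - u * v) - Real.log p - Real.log q := by
    rw [Real.log_div hDm0.ne' (by positivity), Real.log_mul hp0.ne' hq0.ne']
    ring
  have L3 : Real.log ((p * q + u * v) / (p * q))
      = Real.log (p * q + u * v) - Real.log p - Real.log q := by
    rw [Real.log_div hC0.ne' (by positivity), Real.log_mul hp0.ne' hq0.ne']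
    ring
  have L4 : Real.log (v * ((u * q + p * v) * (p * q + u * v)) / q)
      = Real.log v + Real.log (u * q + p * v) + Real.log (p * q + u * v) - Real.log q := by
    rw [Real.log_div (by positivity) hq0.ne', Real.log_mul hv0.ne' (by positivity),
      Real.log_mul hB0.ne' hC0.ne']
    ring
  have L5 : Real.log (u * ((u * q + p * v) * (p * q + u * v)) / p)
      = Real.log u + Real.log (u * q + p * v) + Real.log (p * q + u * v) - Real.log p := by
    rw [Real.log_div (by positivity) hp0.ne', Real.log_mul hu0.ne' (by positivity),
      Real.log_mul hB0.ne' hC0.ne']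
    ring
  have L6 : Real.log (u * (u * q + p * v) / q)
      = Real.log u + Real.log (u * q + p * v) - Real.log q := by
    rw [Real.log_div (by positivity) hq0.ne', Real.log_mul hu0.ne' hB0.ne']
  have L7 : Real.log (v * (u * q + p * v) / p)
      = Real.log v + Real.log (u * q + p * v) - Real.log p := by
    rw [Real.log_div (by positivity) hp0.ne', Real.log_mul hv0.ne' hB0.ne']
  have L8 : Real.log ((u * q + p * v) * (p * q + u * v) * (u * q + p * v) / (p * q))
      = 2 * Real.log (u * q + p * v) + Real.log (p * q + u * v)
        - Real.log p - Real.log q := by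
    rw [Real.log_div (by positivity) (by positivity),
      Real.log_mul (by positivity) hB0.ne',
      Real.log_mul hB0.ne' hC0.ne', Real.log_mul hp0.ne' hq0.ne']
    ring
  have hlx : Real.log x = 2 * Real.log u := by
    rw [← hu2, Real.log_pow]; norm_num
  have hly : Real.log y = 2 * Real.log v := by
    rw [← hv2, Real.log_pow]; norm_num
  have hlp : Real.log (1 - x) = 2 * Real.log p := by
    rw [← hp2, Real.log_pow]; norm_num
  have hlq : Real.log (1 - y) = 2 * Real.log q := by
    rw [← hq2, Real.log_pow]; norm_num
  have hlD : Real.log (1 - x - y)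
      = Real.log (p * q - u * v) + Real.log (p * q + u * v) := by
    rw [hD, Real.log_mul hDm0.ne' hC0.ne']
  simp only [chi, chiZero]
  rw [e2, e3, e4, e5, e6, e7, e8, Ls, L2, L3, L4, L5, L6, L7, L8, hlx, hly, hlp, hlq, hlD]
  ring
end

section
/- Let α ∈ (0,1) and Q ≥ 0 with Q < (1−α)/α, and define a = (1 − √(α(1+Q)))²/(1−α) and b = (1 + √(α(1+Q)))²/(1−α). Then 0 ≤ a < b and a, b solve the Regime IA end-point equations: (√(b+Q) − √(a+Q)) / (√b + √a) = √α, and ( √((b+Q)(a+Q)) + √(ab) − Q ) / 2 = 1. -/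
/-!
Write `t = √α`, `u = √(1 + Q)`, so that `√(α(1 + Q)) = t u`. Then the end-points are
`a = bandLeft α Q = (1 - t u)² / (1 - α)` and `b = bandRight α Q = (1 + t u)² / (1 - α)`,
and the identity `(1 ± t u)² + Q (1 - α) = (u ± t)²` turns `a + Q` and `b + Q` into perfect
squares over `1 - α` as well. All six square roots in the end-point equations are therefore
rational in `t`, `u`, `√(1 - α)`: the first equation reduces to `2t / 2 = t`, and the second
to `((u² - t²) + (1 - t²u²)) / (1 - α) = 2 + Q`.
-/

open Real

namespace RegimeIA

noncomputable def bandLeft (α Q : ℝ) : ℝ := (1 - √(α * (1 + Q))) ^ 2 / (1 - α)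

noncomputable def bandRight (α Q : ℝ) : ℝ := (1 + √(α * (1 + Q))) ^ 2 / (1 - α)

lemma sqrt_sq_div {c : ℝ} (hc : 0 ≤ c) (d : ℝ) : √(c ^ 2 / d) = c / √d := by
  rw [sqrt_div (sq_nonneg c), sqrt_sq hc]

variable {α Q : ℝ}

lemma bandLeft_nonneg (hα1 : α < 1) : 0 ≤ bandLeft α Q :=
  div_nonneg (sq_nonneg _) (sub_nonneg.2 hα1.le)

lemma bandLeft_lt_bandRight (hα1 : α < 1) (hs : 0 < α * (1 + Q)) :
    bandLeft α Q < bandRight α Q := by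
  have hs' : 0 < √(α * (1 + Q)) := sqrt_pos.2 hs
  exact div_lt_div_of_pos_right (by nlinarith) (sub_pos.2 hα1)

lemma sqrt_bandLeft (hs : α * (1 + Q) ≤ 1) :
    √(bandLeft α Q) = (1 - √(α * (1 + Q))) / √(1 - α) :=
  sqrt_sq_div (sub_nonneg.2 (sqrt_le_one.2 hs)) _

lemma sqrt_bandRight : √(bandRight α Q) = (1 + √(α * (1 + Q))) / √(1 - α) :=
  sqrt_sq_div (by positivity) _

lemma bandLeft_add (hα0 : 0 ≤ α) (hα1 : α ≠ 1) (hQ : -1 ≤ Q) :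
    bandLeft α Q + Q = (√(1 + Q) - √α) ^ 2 / (1 - α) := by
  have hα : √α ^ 2 = α := sq_sqrt hα0
  have hQ' : √(1 + Q) ^ 2 = 1 + Q := sq_sqrt (by linarith)
  rw [bandLeft, sqrt_mul hα0, div_add' _ _ _ (sub_ne_zero.2 hα1.symm)]
  congr 1
  linear_combination (√(1 + Q) ^ 2 - 1) * hα - (1 - α) * hQ'

lemma bandRight_add (hα0 : 0 ≤ α) (hα1 : α ≠ 1) (hQ : -1 ≤ Q) :
    bandRight α Q + Q = (√(1 + Q) + √α) ^ 2 / (1 - α) := by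
  have hα : √α ^ 2 = α := sq_sqrt hα0
  have hQ' : √(1 + Q) ^ 2 = 1 + Q := sq_sqrt (by linarith)
  rw [bandRight, sqrt_mul hα0, div_add' _ _ _ (sub_ne_zero.2 hα1.symm)]
  congr 1
  linear_combination (√(1 + Q) ^ 2 - 1) * hα - (1 - α) * hQ'

lemma sqrt_bandLeft_add (hα0 : 0 ≤ α) (hα1 : α ≠ 1) (hαQ : α ≤ 1 + Q) :
    √(bandLeft α Q + Q) = (√(1 + Q) - √α) / √(1 - α) := by
  rw [bandLeft_add hα0 hα1 (by linarith)]
  exact sqrt_sq_div (sub_nonneg.2 (sqrt_le_sqrt hαQ)) _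

lemma sqrt_bandRight_add (hα0 : 0 ≤ α) (hα1 : α ≠ 1) (hQ : -1 ≤ Q) :
    √(bandRight α Q + Q) = (√(1 + Q) + √α) / √(1 - α) := by
  rw [bandRight_add hα0 hα1 hQ]
  exact sqrt_sq_div (by positivity) _

lemma bandEndpoints_ratio (hα0 : 0 ≤ α) (hα1 : α < 1) (hαQ : α ≤ 1 + Q)
    (hs : α * (1 + Q) ≤ 1) :
    (√(bandRight α Q + Q) - √(bandLeft α Q + Q)) / (√(bandRight α Q) + √(bandLeft α Q))
      = √α := by
  have hd : √(1 - α) ≠ 0 := (sqrt_pos.2 (sub_pos.2 hα1)).ne'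
  rw [sqrt_bandRight_add hα0 hα1.ne (by linarith), sqrt_bandLeft_add hα0 hα1.ne hαQ,
    sqrt_bandRight, sqrt_bandLeft hs]
  field_simp
  ring

lemma bandEndpoints_normalization (hα0 : 0 ≤ α) (hα1 : α < 1) (hαQ : α ≤ 1 + Q)
    (hs : α * (1 + Q) ≤ 1) :
    (√((bandRight α Q + Q) * (bandLeft α Q + Q)) + √(bandLeft α Q * bandRight α Q) - Q) / 2
      = 1 := by
  have hα : √α ^ 2 = α := sq_sqrt hα0
  have hQ : √(1 + Q) ^ 2 = 1 + Q := sq_sqrt (by linarith)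
  have hd : √(1 - α) ^ 2 = 1 - α := sq_sqrt (sub_nonneg.2 hα1.le)
  have hLQ : 0 ≤ bandLeft α Q + Q := by
    rw [bandLeft_add hα0 hα1.ne (by linarith)]
    exact div_nonneg (sq_nonneg _) (sub_nonneg.2 hα1.le)
  rw [sqrt_mul' _ hLQ, sqrt_mul (bandLeft_nonneg hα1), sqrt_bandRight_add hα0 hα1.ne (by linarith),
    sqrt_bandLeft_add hα0 hα1.ne hαQ, sqrt_bandRight, sqrt_bandLeft hs,
    sqrt_mul hα0, div_mul_div_comm, div_mul_div_comm, ← sq, hd]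
  have hd0 : 1 - α ≠ 0 := (sub_pos.2 hα1).ne'
  field_simp
  linear_combination (1 - α) * hQ - (1 + √(1 + Q) ^ 2) * hα

end RegimeIA

/-- for `0 < α < 1` and `0 ≤ Q < (1−α)/α`, the explicit end-points
`a = (1 − √(α(1+Q)))²/(1−α)`, `b = (1 + √(α(1+Q)))²/(1−α)` satisfy `0 ≤ a < b`
and the Regime IA end-point equations
`(√(b+Q) − √(a+Q))/(√b + √a) = √α` and `(√((b+Q)(a+Q)) + √(ab) − Q)/2 = 1`. -/
theorem regime_IA_endpoints (α Q : ℝ) (hα0 : 0 < α) (hα1 : α < 1)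
    (hQ0 : 0 ≤ Q) (hQ : Q < (1 - α) / α) :
    0 ≤ (1 - Real.sqrt (α * (1 + Q))) ^ 2 / (1 - α) ∧
    (1 - Real.sqrt (α * (1 + Q))) ^ 2 / (1 - α)
      < (1 + Real.sqrt (α * (1 + Q))) ^ 2 / (1 - α) ∧
    (Real.sqrt ((1 + Real.sqrt (α * (1 + Q))) ^ 2 / (1 - α) + Q)
        - Real.sqrt ((1 - Real.sqrt (α * (1 + Q))) ^ 2 / (1 - α) + Q)) /
      (Real.sqrt ((1 + Real.sqrt (α * (1 + Q))) ^ 2 / (1 - α))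
        + Real.sqrt ((1 - Real.sqrt (α * (1 + Q))) ^ 2 / (1 - α)))
      = Real.sqrt α ∧
    (Real.sqrt (((1 + Real.sqrt (α * (1 + Q))) ^ 2 / (1 - α) + Q) *
          ((1 - Real.sqrt (α * (1 + Q))) ^ 2 / (1 - α) + Q))
        + Real.sqrt ((1 - Real.sqrt (α * (1 + Q))) ^ 2 / (1 - α) *
          ((1 + Real.sqrt (α * (1 + Q))) ^ 2 / (1 - α)))
        - Q) / 2 = 1 := by
  have hαQ : α * (1 + Q) < 1 := by
    rw [lt_div_iff₀ hα0] at hQ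
    linarith
  exact ⟨RegimeIA.bandLeft_nonneg hα1,
    RegimeIA.bandLeft_lt_bandRight hα1 (by positivity),
    RegimeIA.bandEndpoints_ratio hα0.le hα1 (by linarith) hαQ.le,
    RegimeIA.bandEndpoints_normalization hα0.le hα1 (by linarith) hαQ.le⟩
end

section
/- Let α ∈ (0,1) and Q > (1−α)/α, and define a = (1 − √(α(1+Q)))²/(1−α) = (√(α(1+Q)) − 1)²/(1−α) and b = (1 + √(α(1+Q)))²/(1−α). Then 0 < a < b and a, b solve the Regime IB end-point equations: (√(b+Q) − √(a+Q)) / (√b − √a) = √α, and ( √((a+Q)(b+Q)) − √(ab) − Q ) / 2 = 1. -/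
/-!
Write `s = √(α(1+Q))`, so that `a = (s - 1)² / (1 - α)` and `b = (s + 1)² / (1 - α)`; the hypothesis
on `Q` is exactly `s > 1`. Since `s² = α(1 + Q)`, adding `Q` turns the squares `(s ± 1)²` into squares
as well: `a + Q = (s - α)² / (α(1 - α))` and `b + Q = (s + α)² / (α(1 - α))`. All four square roots
in the end-point equations are therefore linear in `s`, and both equations become polynomial
identities in `s`, `√α` and `√(1 - α)`.
-/

open Real

variable {α Q s ε : ℝ}

lemma sqrt_sq_div_of_nonneg {x : ℝ} (c : ℝ) (hx : 0 ≤ x) : √(x ^ 2 / c) = x / √c := by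
  rw [sqrt_div (sq_nonneg x), sqrt_sq hx]

lemma sq_one_add_mul_div_add_eq (hα0 : α ≠ 0) (hα1 : α ≠ 1) (hs : s ^ 2 = α * (1 + Q))
    (hε : ε ^ 2 = 1) :
    (1 + ε * s) ^ 2 / (1 - α) + Q = (s + ε * α) ^ 2 / (α * (1 - α)) := by
  have h1α : 1 - α ≠ 0 := sub_ne_zero.2 hα1.symm
  field_simp
  linear_combination (α - 1) * hs + (α * s ^ 2 - α ^ 2) * hε

lemma sqrt_sq_one_add_mul_div (hε : ε ^ 2 = 1) (h : 0 ≤ s + ε) :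
    √((1 + ε * s) ^ 2 / (1 - α)) = (s + ε) / √(1 - α) := by
  rw [show (1 + ε * s) ^ 2 = (s + ε) ^ 2 by linear_combination (s ^ 2 - 1) * hε]
  exact sqrt_sq_div_of_nonneg _ h

lemma sqrt_sq_one_add_mul_div_add (hα0 : 0 < α) (hα1 : α ≠ 1) (hs : s ^ 2 = α * (1 + Q))
    (hε : ε ^ 2 = 1) (h : 0 ≤ s + ε * α) :
    √((1 + ε * s) ^ 2 / (1 - α) + Q) = (s + ε * α) / (√α * √(1 - α)) := by
  rw [sq_one_add_mul_div_add_eq hα0.ne' hα1 hs hε, sqrt_sq_div_of_nonneg _ h, sqrt_mul hα0.le]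

/-- for `0 < α < 1` and `Q > (1−α)/α`, the explicit end-points
`a = (√(α(1+Q)) − 1)²/(1−α)`, `b = (1 + √(α(1+Q)))²/(1−α)` satisfy `0 < a < b`
and the Regime IB end-point equations
`(√(b+Q) − √(a+Q))/(√b − √a) = √α` and `(√((a+Q)(b+Q)) − √(ab) − Q)/2 = 1`. -/
theorem regime_IB_endpoints (α Q : ℝ) (hα0 : 0 < α) (hα1 : α < 1)
    (hQ : Q > (1 - α) / α) :
    0 < (1 - Real.sqrt (α * (1 + Q))) ^ 2 / (1 - α) ∧
    (1 - Real.sqrt (α * (1 + Q))) ^ 2 / (1 - α)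
      = (Real.sqrt (α * (1 + Q)) - 1) ^ 2 / (1 - α) ∧
    (1 - Real.sqrt (α * (1 + Q))) ^ 2 / (1 - α)
      < (1 + Real.sqrt (α * (1 + Q))) ^ 2 / (1 - α) ∧
    (Real.sqrt ((1 + Real.sqrt (α * (1 + Q))) ^ 2 / (1 - α) + Q)
        - Real.sqrt ((1 - Real.sqrt (α * (1 + Q))) ^ 2 / (1 - α) + Q)) /
      (Real.sqrt ((1 + Real.sqrt (α * (1 + Q))) ^ 2 / (1 - α))
        - Real.sqrt ((1 - Real.sqrt (α * (1 + Q))) ^ 2 / (1 - α)))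
      = Real.sqrt α ∧
    (Real.sqrt (((1 - Real.sqrt (α * (1 + Q))) ^ 2 / (1 - α) + Q) *
          ((1 + Real.sqrt (α * (1 + Q))) ^ 2 / (1 - α) + Q))
        - Real.sqrt ((1 - Real.sqrt (α * (1 + Q))) ^ 2 / (1 - α) *
          ((1 + Real.sqrt (α * (1 + Q))) ^ 2 / (1 - α)))
        - Q) / 2 = 1 := by
  have hαQ : 1 < α * (1 + Q) := by rw [gt_iff_lt, div_lt_iff₀ hα0] at hQ; linarith
  set s := √(α * (1 + Q))
  have hs : s ^ 2 = α * (1 + Q) := sq_sqrt (by linarith)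
  have hs1 : 1 < s := (lt_sqrt zero_le_one).2 (by linarith)
  have h1α : 0 < 1 - α := by linarith
  have hneg_one : (-1 : ℝ) ^ 2 = 1 := by norm_num
  have ha := sqrt_sq_one_add_mul_div (α := α) hneg_one (by linarith : 0 ≤ s + -1)
  have hb := sqrt_sq_one_add_mul_div (α := α) (one_pow 2) (by linarith : 0 ≤ s + 1)
  have haQ := sqrt_sq_one_add_mul_div_add hα0 hα1.ne hs hneg_one (by linarith : 0 ≤ s + -1 * α)
  have hbQ := sqrt_sq_one_add_mul_div_add hα0 hα1.ne hs (one_pow 2) (by linarith : 0 ≤ s + 1 * α)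
  simp only [neg_one_mul, one_mul, ← sub_eq_add_neg] at ha hb haQ hbQ
  have hu : √α ^ 2 = α := sq_sqrt hα0.le
  have ht : √(1 - α) ^ 2 = 1 - α := sq_sqrt h1α.le
  have hu0 : 0 < √α := sqrt_pos.2 hα0
  have ht0 : 0 < √(1 - α) := sqrt_pos.2 h1α
  refine ⟨div_pos (sq_pos_of_ne_zero (by linarith)) h1α, by ring,
    (div_lt_div_iff_of_pos_right h1α).2 (by nlinarith), ?_, ?_⟩
  · rw [ha, hb, haQ, hbQ]
    field_simp
    linear_combination (-2) * hu
  · have hQ0 : 0 < Q := lt_trans (by positivity) hQ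
    rw [sqrt_mul' _ (by positivity), sqrt_mul' _ (by positivity), ha, hb, haQ, hbQ]
    field_simp
    rw [hu, ht]
    linear_combination (1 - α) * hs
end

section
/- Let R, Q, η be real numbers with R > 1, Q ≥ 0, 0 ≤ η ≤ 1, set N₊ = R+Q+1, N₋ = R−1, D = 2+Q+(2R+Q)η, and define C₊ = N₊(1−η)(1+Rη)(1+Q+(R+Q)η)/D², C₋ = N₋(1+η)(1+Q+Rη)(1+(R+Q)η)/D², B₊ = N₊(1+η)(1+Q+Rη)(1+Q+(R+Q)η)/D², B₋ = N₋(1−η)(1+Rη)(1+(R+Q)η)/D², A₊ = N₊(1+η)(1+Rη)(1+(R+Q)η)/D², A₋ = N₋(1−η)(1+Q+Rη)(1+Q+(R+Q)η)/D². Then the following identities hold: (i) A₊A₋ = B₊B₋ = C₊C₋; (ii) A₊ + A₋ = B₊ + B₋ − Q = R − C₊ − C₋; (iii) A₊ + B₊ + 2C₊ = N₊ and A₋ + B₋ + 2C₋ = N₋. -/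
/-- the rational parametrization of the Regime II end-point data.
With `N₊ = R+Q+1`, `N₋ = R−1`, `D = 2+Q+(2R+Q)η` and the displayed `A±, B±, C±`,
the identities `A₊A₋ = B₊B₋ = C₊C₋`, `A₊+A₋ = B₊+B₋−Q = R−C₊−C₋`,
`A₊+B₊+2C₊ = N₊`, `A₋+B₋+2C₋ = N₋` hold. -/
theorem regime_II_rational_parametrization (R Q η : ℝ)
    (hR : R > 1) (hQ : 0 ≤ Q) (hη0 : 0 ≤ η) (hη1 : η ≤ 1) :
    let Np := R + Q + 1
    let Nm := R - 1
    let D := 2 + Q + (2 * R + Q) * η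
    let Cp := Np * (1 - η) * (1 + R * η) * (1 + Q + (R + Q) * η) / D ^ 2
    let Cm := Nm * (1 + η) * (1 + Q + R * η) * (1 + (R + Q) * η) / D ^ 2
    let Bp := Np * (1 + η) * (1 + Q + R * η) * (1 + Q + (R + Q) * η) / D ^ 2
    let Bm := Nm * (1 - η) * (1 + R * η) * (1 + (R + Q) * η) / D ^ 2
    let Ap := Np * (1 + η) * (1 + R * η) * (1 + (R + Q) * η) / D ^ 2
    let Am := Nm * (1 - η) * (1 + Q + R * η) * (1 + Q + (R + Q) * η) / D ^ 2
    (Ap * Am = Bp * Bm ∧ Bp * Bm = Cp * Cm) ∧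
    (Ap + Am = Bp + Bm - Q ∧ Bp + Bm - Q = R - Cp - Cm) ∧
    (Ap + Bp + 2 * Cp = Np ∧ Am + Bm + 2 * Cm = Nm) := by
  have hD : 2 + Q + (2 * R + Q) * η ≠ 0 := by nlinarith
  refine ⟨⟨?_, ?_⟩, ⟨?_, ?_⟩, ?_, ?_⟩ <;> field_simp <;> ring
end

section
/- Let N₊, N₋, Q, t be real numbers with t ≠ 1 and N₋t + N₊ ≠ 0, and define z₋ = ( Q²t/(t−1)² + N₊N₋ ) / (N₋t + N₊) and z₊ = t·z₋. Then Q²·z₊·z₋ = (N₋·z₊ + N₊·z₋ − N₊N₋)·(z₊ − z₋)². -/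
/-!
On the line `z₊ = t z₋` the curve equation, moved to one side, factors as
`z₋² (Q² t − ((N₋ t + N₊) z₋ − N₊N₋)(t − 1)²)`, so apart from the double point `z₋ = 0`
each line through the origin with `t ≠ 1` meets the cubic only where a linear equation in `z₋` holds,
and the parametrization solves that equation.
-/

theorem cubic_residual_on_line {R : Type*} [CommRing R] (Np Nm Q t z : R) :
    Q ^ 2 * (t * z) * z - (Nm * (t * z) + Np * z - Np * Nm) * (t * z - z) ^ 2 =
      z ^ 2 * (Q ^ 2 * t - ((Nm * t + Np) * z - Np * Nm) * (t - 1) ^ 2) := by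
  ring

theorem cubic_on_line_iff {K : Type*} [Field K] {Np Nm Q t : K} (ht : t ≠ 1) (z : K) :
    Q ^ 2 * (t * z) * z = (Nm * (t * z) + Np * z - Np * Nm) * (t * z - z) ^ 2 ↔
      z = 0 ∨ (Nm * t + Np) * z = Q ^ 2 * t / (t - 1) ^ 2 + Np * Nm := by
  have hsq : (t - 1) ^ 2 ≠ 0 := pow_ne_zero 2 (sub_ne_zero.mpr ht)
  rw [← sub_eq_zero, cubic_residual_on_line, mul_eq_zero, pow_eq_zero_iff two_ne_zero,
    sub_eq_zero, ← sub_eq_iff_eq_add, eq_div_iff hsq, eq_comm (a := Q ^ 2 * t)]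

theorem cubic_curve_rational_parametrization_general (Np Nm Q t : ℝ)
    (ht : t ≠ 1) :
    let zm := (Q ^ 2 * t / (t - 1) ^ 2 + Np * Nm) / (Nm * t + Np)
    let zp := t * zm
    Q ^ 2 * zp * zm = (Nm * zp + Np * zm - Np * Nm) * (zp - zm) ^ 2 := by
  intro zm zp
  refine (cubic_on_line_iff ht zm).mpr ?_
  rcases eq_or_ne (Nm * t + Np) 0 with hden | hden
  · -- division by zero makes `zm = 0`, the double point
    exact .inl (by simp [zm, hden])
  · exact .inr (mul_div_cancel₀ _ hden)

/-- rational parametrization of the cubic curve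
`Q² z₊ z₋ = (N₋ z₊ + N₊ z₋ − N₊N₋)(z₊ − z₋)²`: with
`z₋ = (Q²t/(t−1)² + N₊N₋)/(N₋t + N₊)` and `z₊ = t z₋`, the curve equation holds. -/
theorem cubic_curve_rational_parametrization (Np Nm Q t : ℝ)
    (ht : t ≠ 1) (hden : Nm * t + Np ≠ 0) :
    let zm := (Q ^ 2 * t / (t - 1) ^ 2 + Np * Nm) / (Nm * t + Np)
    let zp := t * zm
    Q ^ 2 * zp * zm = (Nm * zp + Np * zm - Np * Nm) * (zp - zm) ^ 2 :=
  cubic_curve_rational_parametrization_general Np Nm Q t ht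
end

section
/- Let x, y be real numbers with 0 < y ≤ x and x + y < 1, and set h = √(xy/((1−x)(1−y))). Then the function η ↦ χ(x,y;η), where χ(x,y;η) := −xy·log η + ((1−x−y)²/2)·log(1−η) + (1/2)·log(1+η) − (1−x)y·log(y+(1−x)η) − x(1−y)·log(x+(1−y)η) + x(1−x)·log(x+(1−x)η) + y(1−y)·log(y+(1−y)η) + ((x−y)²/2)·log(x+y+(2−x−y)η), has vanishing first and second derivatives at η = h: ∂_η χ(x,y;η)|_{η=h} = 0 and ∂²_η χ(x,y;η)|_{η=h} = 0. -/
open Filter Topology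

theorem deriv_eq_zero_and_deriv_deriv_eq_zero_of_hasDerivAt_sq_mul
    {𝕜 : Type*} [NontriviallyNormedField 𝕜] {f q r : 𝕜 → 𝕜} {a : 𝕜}
    (hf : ∀ᶠ t in 𝓝 a, HasDerivAt f (q t ^ 2 * r t) t) (hqa : q a = 0)
    (hq : DifferentiableAt 𝕜 q a) (hr : DifferentiableAt 𝕜 r a) :
    deriv f a = 0 ∧ deriv (deriv f) a = 0 := by
  have hderiv : deriv f =ᶠ[𝓝 a] fun t => q t ^ 2 * r t := hf.mono fun t ht => ht.deriv
  refine ⟨by simp [hderiv.eq_of_nhds, hqa], ?_⟩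
  rw [hderiv.deriv_eq, deriv_fun_mul (hq.fun_pow 2) hr]
  simp [hq, hqa]

noncomputable def chiDerivNum (x y t : ℝ) : ℝ :=
  (x + y) * (x * y + 3 * (1 - x) * (1 - y) * t ^ 2)
    + (2 - x - y) * t * (3 * x * y + (1 - x) * (1 - y) * t ^ 2)

noncomputable def chiDerivDen (x y t : ℝ) : ℝ :=
  t * (1 - t) * (1 + t) * (y + (1 - x) * t) * (x + (1 - y) * t) * (x + (1 - x) * t)
    * (y + (1 - y) * t) * (x + y + (2 - x - y) * t)

theorem chi_deriv_sum_eq {x y t : ℝ} (h1 : t ≠ 0) (h2 : 1 - t ≠ 0) (h3 : 1 + t ≠ 0)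
    (h4 : y + (1 - x) * t ≠ 0) (h5 : x + (1 - y) * t ≠ 0) (h6 : x + (1 - x) * t ≠ 0)
    (h7 : y + (1 - y) * t ≠ 0) (h8 : x + y + (2 - x - y) * t ≠ 0) :
    -(x * y) * t⁻¹ + (1 - x - y) ^ 2 / 2 * (-1 / (1 - t)) + 1 / 2 * (1 / (1 + t))
      - (1 - x) * y * ((1 - x) / (y + (1 - x) * t))
      - x * (1 - y) * ((1 - y) / (x + (1 - y) * t))
      + x * (1 - x) * ((1 - x) / (x + (1 - x) * t))
      + y * (1 - y) * ((1 - y) / (y + (1 - y) * t))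
      + (x - y) ^ 2 / 2 * ((2 - x - y) / (x + y + (2 - x - y) * t))
    = ((1 - x) * (1 - y) * t ^ 2 - x * y) ^ 2 * -(chiDerivNum x y t / chiDerivDen x y t) := by
  unfold chiDerivNum chiDerivDen
  -- `field_simp` only manages to clear the denominators when the linear factors are atoms.
  generalize hL2 : 1 - t = L2 at *
  generalize hL3 : 1 + t = L3 at *
  generalize hL4 : y + (1 - x) * t = L4 at *
  generalize hL5 : x + (1 - y) * t = L5 at *
  generalize hL6 : x + (1 - x) * t = L6 at *
  generalize hL7 : y + (1 - y) * t = L7 at *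
  generalize hL8 : x + y + (2 - x - y) * t = L8 at *
  field_simp
  subst hL2 hL3 hL4 hL5 hL6 hL7 hL8
  ring

section

variable {x y t : ℝ} (hx0 : 0 ≤ x) (hx1 : x < 1) (hy0 : 0 ≤ y) (hy1 : y < 1)
  (ht0 : 0 < t) (ht1 : t < 1)

include hx0 hx1 hy0 hy1 ht0 ht1

theorem chi_linear_factors_pos :
    0 < 1 - t ∧ 0 < 1 + t ∧ 0 < y + (1 - x) * t ∧ 0 < x + (1 - y) * t ∧
      0 < x + (1 - x) * t ∧ 0 < y + (1 - y) * t ∧ 0 < x + y + (2 - x - y) * t := by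
  refine ⟨?_, ?_, ?_, ?_, ?_, ?_, ?_⟩ <;> nlinarith

theorem chiDerivDen_pos : 0 < chiDerivDen x y t := by
  obtain ⟨h2, h3, h4, h5, h6, h7, h8⟩ := chi_linear_factors_pos hx0 hx1 hy0 hy1 ht0 ht1
  unfold chiDerivDen
  positivity

theorem hasDerivAt_chi :
    HasDerivAt (chi x y)
      (((1 - x) * (1 - y) * t ^ 2 - x * y) ^ 2 * -(chiDerivNum x y t / chiDerivDen x y t)) t := by
  obtain ⟨h2, h3, h4, h5, h6, h7, h8⟩ := chi_linear_factors_pos hx0 hx1 hy0 hy1 ht0 ht1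
  have hlog (p m : ℝ) (hpos : 0 < p + m * t) :
      HasDerivAt (fun s => Real.log (p + m * s)) (m / (p + m * t)) t := by
    simpa using (((hasDerivAt_id t).const_mul m).const_add p).log hpos.ne'
  have d1 := (Real.hasDerivAt_log ht0.ne').const_mul (-(x * y))
  have d2 := (((hasDerivAt_id' t).const_sub 1).log h2.ne').const_mul ((1 - x - y) ^ 2 / 2)
  have d3 := (((hasDerivAt_id' t).const_add 1).log h3.ne').const_mul (1 / 2)
  have d4 := (hlog y (1 - x) h4).const_mul ((1 - x) * y)
  have d5 := (hlog x (1 - y) h5).const_mul (x * (1 - y))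
  have d6 := (hlog x (1 - x) h6).const_mul (x * (1 - x))
  have d7 := (hlog y (1 - y) h7).const_mul (y * (1 - y))
  have d8 := (hlog (x + y) (2 - x - y) h8).const_mul ((x - y) ^ 2 / 2)
  refine (((((((d1.add d2).add d3).sub d4).sub d5).add d6).add d7).add d8).congr_deriv ?_
  exact chi_deriv_sum_eq ht0.ne' h2.ne' h3.ne' h4.ne' h5.ne' h6.ne' h7.ne' h8.ne'

end

/-- the first and second derivatives of `η ↦ χ(x,y;η)` vanish at
`η = h = √(xy/((1−x)(1−y)))`. -/
theorem chi_first_two_derivs_vanish (x y : ℝ)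
    (hy : 0 < y) (hyx : y ≤ x) (hxy : x + y < 1) :
    deriv (fun η => chi x y η) (Real.sqrt (x * y / ((1 - x) * (1 - y)))) = 0 ∧
    deriv (deriv (fun η => chi x y η)) (Real.sqrt (x * y / ((1 - x) * (1 - y)))) = 0 := by
  have hx : 0 < x := hy.trans_le hyx
  have hx1 : x < 1 := by linarith
  have hy1 : y < 1 := by linarith
  have hs : 0 < (1 - x) * (1 - y) := mul_pos (by linarith) (by linarith)
  have hq : 0 < x * y / ((1 - x) * (1 - y)) := div_pos (mul_pos hx hy) hs
  set h := Real.sqrt (x * y / ((1 - x) * (1 - y)))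
  have h0 : 0 < h := Real.sqrt_pos.2 hq
  have h1 : h < 1 := (Real.sqrt_lt' one_pos).2 (by rw [one_pow, div_lt_one hs]; nlinarith)
  have hroot : (1 - x) * (1 - y) * h ^ 2 - x * y = 0 := by
    rw [Real.sq_sqrt hq.le, mul_div_cancel₀ _ hs.ne', sub_self]
  have hden := (chiDerivDen_pos hx.le hx1 hy.le hy1 h0 h1).ne'
  refine deriv_eq_zero_and_deriv_deriv_eq_zero_of_hasDerivAt_sq_mul
    (q := fun t => (1 - x) * (1 - y) * t ^ 2 - x * y)
    (r := fun t => -(chiDerivNum x y t / chiDerivDen x y t)) ?_ hroot (by fun_prop) ?_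
  · filter_upwards [Ioo_mem_nhds h0 h1] with t ht
    exact hasDerivAt_chi hx.le hx1 hy.le hy1 ht.1 ht.2
  · unfold chiDerivNum chiDerivDen at *
    fun_prop (disch := assumption)
end

section
/- Let x, y be real numbers with 0 < y ≤ x and x + y < 1, and set h = √(xy/((1−x)(1−y))). Then −2/(1−h) − 2/(1+h) + (1−x)/(y+(1−x)h) + (1−y)/(x+(1−y)h) − (1−x)/(x+(1−x)h) − (1−y)/(y+(1−y)h) = −4(1−x)(1−y)/(1−x−y). Equivalently, the logarithmic derivative ∂_η log α(η) at η = h equals −4(1−x)(1−y)/(1−x−y), where α(η) = (1−η)²(y+(1−x)η)(x+(1−y)η) / ((1+η)²(x+(1−x)η)(y+(1−y)η)). -/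
/-!
At the critical value `h` one has `(1 - x)(1 - y) h² = x y`, hence
`1 - h² = (1 - x - y) / ((1 - x)(1 - y))`. The logarithmic derivative of `α` at `h` is the sum of
the logarithmic derivatives of its six linear factors: the two factors `(1 ∓ η)²` contribute
`-4 / (1 - h²)`, which is the claimed value, and the contributions of the four remaining factors
cancel, because after clearing denominators their sum is a multiple of `(1 - x)(1 - y) h² - x y`.
-/

open Real

noncomputable section

def alpha (x y η : ℝ) : ℝ :=
  (1 - η) ^ 2 * (y + (1 - x) * η) * (x + (1 - y) * η) /
    ((1 + η) ^ 2 * (x + (1 - x) * η) * (y + (1 - y) * η))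

def logAlphaDeriv (x y η : ℝ) : ℝ :=
  -2 / (1 - η) - 2 / (1 + η) + (1 - x) / (y + (1 - x) * η) + (1 - y) / (x + (1 - y) * η)
    - (1 - x) / (x + (1 - x) * η) - (1 - y) / (y + (1 - y) * η)

def criticalEta (x y : ℝ) : ℝ := √(x * y / ((1 - x) * (1 - y)))

end

theorem hasDerivAt_log_alpha {x y η : ℝ} (h₁ : 1 - η ≠ 0) (h₂ : 1 + η ≠ 0)
    (h₃ : y + (1 - x) * η ≠ 0) (h₄ : x + (1 - y) * η ≠ 0)
    (h₅ : x + (1 - x) * η ≠ 0) (h₆ : y + (1 - y) * η ≠ 0) :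
    HasDerivAt (fun η => log (alpha x y η)) (logAlphaDeriv x y η) η := by
  have hlin : ∀ a b : ℝ, HasDerivAt (fun η : ℝ => a + b * η) b η := fun a b => by
    simpa using ((hasDerivAt_id η).const_mul b).const_add a
  have hsub : HasDerivAt (fun η : ℝ => 1 - η) (-1) η := by
    simpa using (hasDerivAt_id η).const_sub 1
  have hadd : HasDerivAt (fun η : ℝ => 1 + η) 1 η := by
    simpa using (hasDerivAt_id η).const_add 1
  have hnum : HasDerivAt (fun η => (1 - η) ^ 2 * (y + (1 - x) * η) * (x + (1 - y) * η)) _ η :=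
    ((hsub.pow 2).mul (hlin y (1 - x))).mul (hlin x (1 - y))
  have hden : HasDerivAt (fun η => (1 + η) ^ 2 * (x + (1 - x) * η) * (y + (1 - y) * η)) _ η :=
    ((hadd.pow 2).mul (hlin x (1 - x))).mul (hlin y (1 - y))
  have hden_ne : (1 + η) ^ 2 * (x + (1 - x) * η) * (y + (1 - y) * η) ≠ 0 := by positivity
  have hnum_ne : (1 - η) ^ 2 * (y + (1 - x) * η) * (x + (1 - y) * η) ≠ 0 := by positivity
  refine ((hnum.div hden hden_ne).log (div_ne_zero hnum_ne hden_ne)).congr_deriv ?_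
  simp only [logAlphaDeriv, Pi.div_apply, Pi.pow_apply, Pi.mul_apply]
  -- `field_simp` looks for nonvanishing denominators in its own normal form `η * (1 - x)`
  simp only [mul_comm (1 - x) η, mul_comm (1 - y) η] at h₃ h₄ h₅ h₆ ⊢
  field_simp
  ring

section CriticalEta

variable {x y : ℝ} (hx : 0 < x) (hy : 0 < y) (hxy : x + y < 1)
include hx hy hxy

theorem one_sub_mul_one_sub_mul_criticalEta_sq :
    (1 - x) * (1 - y) * criticalEta x y ^ 2 = x * y := by
  have : 0 < (1 - x) * (1 - y) := mul_pos (by linarith) (by linarith)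
  rw [criticalEta, sq_sqrt (by positivity)]
  exact mul_div_cancel₀ _ this.ne'

theorem criticalEta_pos : 0 < criticalEta x y := by
  have : 0 < (1 - x) * (1 - y) := mul_pos (by linarith) (by linarith)
  exact sqrt_pos.mpr (by positivity)

theorem criticalEta_lt_one : criticalEta x y < 1 := by
  have : 0 < (1 - x) * (1 - y) := mul_pos (by linarith) (by linarith)
  rw [criticalEta, sqrt_lt' one_pos, one_pow, div_lt_one this]
  nlinarith

theorem logAlphaDeriv_criticalEta :
    logAlphaDeriv x y (criticalEta x y) = -4 * (1 - x) * (1 - y) / (1 - x - y) := by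
  have key := one_sub_mul_one_sub_mul_criticalEta_sq hx hy hxy
  have hs₀ := criticalEta_pos hx hy hxy
  have hs₁ := criticalEta_lt_one hx hy hxy
  set s := criticalEta x y
  have hx₁ : 0 < 1 - x := by linarith
  have hy₁ : 0 < 1 - y := by linarith
  have quadratic : -2 / (1 - s) - 2 / (1 + s) = -4 * (1 - x) * (1 - y) / (1 - x - y) := by
    rw [div_sub_div _ _ (by linarith) (by linarith), div_eq_div_iff (by nlinarith) (by linarith)]
    linear_combination -4 * key
  have linear : (1 - x) / (y + (1 - x) * s) + (1 - y) / (x + (1 - y) * s)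
      - (1 - x) / (x + (1 - x) * s) - (1 - y) / (y + (1 - y) * s) = 0 := by
    field_simp
    linear_combination (x - y) ^ 2 * key
  rw [logAlphaDeriv]
  linear_combination quadratic + linear

end CriticalEta

/-- with `h = √(xy/((1−x)(1−y)))`,
`−2/(1−h) − 2/(1+h) + (1−x)/(y+(1−x)h) + (1−y)/(x+(1−y)h) − (1−x)/(x+(1−x)h)
− (1−y)/(y+(1−y)h) = −4(1−x)(1−y)/(1−x−y)`; equivalently, the logarithmic
derivative `∂_η log α(η)` at `η = h` equals `−4(1−x)(1−y)/(1−x−y)`, where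
`α(η) = (1−η)²(y+(1−x)η)(x+(1−y)η)/((1+η)²(x+(1−x)η)(y+(1−y)η))`. -/
theorem log_alpha_deriv_at_h (x y : ℝ)
    (hy : 0 < y) (hyx : y ≤ x) (hxy : x + y < 1) :
    (-2 / (1 - Real.sqrt (x * y / ((1 - x) * (1 - y))))
        - 2 / (1 + Real.sqrt (x * y / ((1 - x) * (1 - y))))
        + (1 - x) / (y + (1 - x) * Real.sqrt (x * y / ((1 - x) * (1 - y))))
        + (1 - y) / (x + (1 - y) * Real.sqrt (x * y / ((1 - x) * (1 - y))))
        - (1 - x) / (x + (1 - x) * Real.sqrt (x * y / ((1 - x) * (1 - y))))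
        - (1 - y) / (y + (1 - y) * Real.sqrt (x * y / ((1 - x) * (1 - y))))
      = -4 * (1 - x) * (1 - y) / (1 - x - y)) ∧
    deriv
        (fun η : ℝ => Real.log
          ((1 - η) ^ 2 * (y + (1 - x) * η) * (x + (1 - y) * η) /
            ((1 + η) ^ 2 * (x + (1 - x) * η) * (y + (1 - y) * η))))
        (Real.sqrt (x * y / ((1 - x) * (1 - y))))
      = -4 * (1 - x) * (1 - y) / (1 - x - y) := by
  have hx : 0 < x := hy.trans_le hyx
  have hs₀ := criticalEta_pos hx hy hxy
  have hs₁ := criticalEta_lt_one hx hy hxy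
  have hx₁ : 0 < 1 - x := by linarith
  have hy₁ : 0 < 1 - y := by linarith
  have value := logAlphaDeriv_criticalEta hx hy hxy
  have hderiv := hasDerivAt_log_alpha (x := x) (y := y) (η := criticalEta x y)
    (by linarith) (by linarith) (by positivity) (by positivity) (by positivity) (by positivity)
  exact ⟨value, hderiv.deriv.trans value⟩
end

section
/- Let λ, φ be real numbers with 0 < λ < φ < π/2, and set x = cos²((φ+λ)/2), y = sin²((φ−λ)/2). Then: (i) h := √(xy/((1−x)(1−y))) = (sin φ − sin λ)/(sin φ + sin λ); and (ii) the third derivative of η ↦ χ(x,y;η) at η = h equals ∂³_η χ(x,y;η)|_{η=h} = −(sin φ − sin λ)(sin φ + sin λ)⁷ / (8 sin λ · cos⁴λ · sin³φ), where χ(x,y;η) := −xy·log η + ((1−x−y)²/2)·log(1−η) + (1/2)·log(1+η) − (1−x)y·log(y+(1−x)η) − x(1−y)·log(x+(1−y)η) + x(1−x)·log(x+(1−x)η) + y(1−y)·log(y+(1−y)η) + ((x−y)²/2)·log(x+y+(2−x−y)η). -/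
open Real

/-- Valid at every `t`: where `a + b * t = 0` both sides vanish, as `deriv log 0 = 0 = 0⁻¹`. -/
theorem deriv_log_affine (a b : ℝ) :
    deriv (fun t => log (a + b * t)) = fun t => b * (b * t + a)⁻¹ := by
  funext t
  rw [deriv_comp_mul_left b (fun u => log (a + u)), deriv_comp_const_add, deriv_log', smul_eq_mul,
    add_comm]

theorem iteratedDeriv_three_log_affine (a b : ℝ) :
    iteratedDeriv 3 (fun t => log (a + b * t)) = fun t => 2 * b ^ 3 / (a + b * t) ^ 3 := by
  funext t
  rw [iteratedDeriv_succ', deriv_log_affine, iteratedDeriv_const_mul_field, iteratedDeriv_eq_iterate,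
    iter_deriv_inv_linear]
  simp only [even_two, Even.neg_pow, one_pow, Nat.factorial_two, Nat.cast_ofNat, one_mul,
    Int.reduceNeg, Int.reduceSub, zpow_neg, zpow_ofNat]
  ring

theorem iteratedDeriv_three_chi {x y η : ℝ} (hx₀ : 0 < x) (hx₁ : x < 1) (hy₀ : 0 < y) (hy₁ : y < 1)
    (hη₀ : 0 < η) (hη₁ : η < 1) :
    iteratedDeriv 3 (chi x y) η =
      -2 * (x * y) / η ^ 3 - (1 - x - y) ^ 2 / (1 - η) ^ 3 + 1 / (1 + η) ^ 3
        - 2 * ((1 - x) ^ 4 * y) / (y + (1 - x) * η) ^ 3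
        - 2 * (x * (1 - y) ^ 4) / (x + (1 - y) * η) ^ 3
        + 2 * (x * (1 - x) ^ 4) / (x + (1 - x) * η) ^ 3
        + 2 * (y * (1 - y) ^ 4) / (y + (1 - y) * η) ^ 3
        + (x - y) ^ 2 * (2 - x - y) ^ 3 / (x + y + (2 - x - y) * η) ^ 3 := by
  have hchi : chi x y = fun t =>
      -(x * y) * log (0 + 1 * t)
        + (1 - x - y) ^ 2 / 2 * log (1 + (-1) * t)
        + 1 / 2 * log (1 + 1 * t)
        - (1 - x) * y * log (y + (1 - x) * t)
        - x * (1 - y) * log (x + (1 - y) * t)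
        + x * (1 - x) * log (x + (1 - x) * t)
        + y * (1 - y) * log (y + (1 - y) * t)
        + (x - y) ^ 2 / 2 * log (x + y + (2 - x - y) * t) := by
    funext t
    simp only [chi, zero_add, one_mul, neg_one_mul, ← sub_eq_add_neg]
  have h₁ : (0 : ℝ) + 1 * η ≠ 0 := by positivity
  have h₂ : (1 : ℝ) + (-1) * η ≠ 0 := by linarith
  have h₃ : (1 : ℝ) + 1 * η ≠ 0 := by positivity
  have h₄ : y + (1 - x) * η ≠ 0 := by nlinarith
  have h₅ : x + (1 - y) * η ≠ 0 := by nlinarith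
  have h₆ : x + (1 - x) * η ≠ 0 := by nlinarith
  have h₇ : y + (1 - y) * η ≠ 0 := by nlinarith
  have h₈ : x + y + (2 - x - y) * η ≠ 0 := by nlinarith
  rw [hchi]
  simp (disch := fun_prop (disch := assumption)) only [iteratedDeriv_fun_add,
    iteratedDeriv_fun_sub, iteratedDeriv_const_mul_field, iteratedDeriv_three_log_affine]
  simp only [zero_add, one_mul, neg_one_mul, ← sub_eq_add_neg]
  ring

theorem iteratedDeriv_three_chi_tan_param {p q : ℝ} (hq : 0 < q) (hqp : q < p) :
    iteratedDeriv 3 (chi (1 + p ^ 2)⁻¹ (q ^ 2 / (1 + q ^ 2))) (q / p) =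
      -(32 * q * p ^ 7) / ((p - q) * (1 + p * q) ^ 4 * (p + q) ^ 3) := by
  have hp : 0 < p := hq.trans hqp
  have hx₁ : (1 + p ^ 2)⁻¹ < 1 := inv_lt_one_of_one_lt₀ (by nlinarith)
  have hy₁ : q ^ 2 / (1 + q ^ 2) < 1 := (div_lt_one (by positivity)).mpr (by linarith)
  have hη₁ : q / p < 1 := (div_lt_one hp).mpr hqp
  rw [iteratedDeriv_three_chi (by positivity) hx₁ (by positivity) hy₁ (by positivity) hη₁]
  have hpq : p - q ≠ 0 := by linarith
  have e₁ : 1 - q / p = (p - q) / p := by field_simp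
  have e₂ : 1 + q / p = (p + q) / p := by field_simp
  have e₃ : q ^ 2 / (1 + q ^ 2) + (1 - (1 + p ^ 2)⁻¹) * (q / p)
      = q * (p + q) * (1 + p * q) / ((1 + p ^ 2) * (1 + q ^ 2)) := by field_simp; ring
  have e₄ : (1 + p ^ 2)⁻¹ + (1 - q ^ 2 / (1 + q ^ 2)) * (q / p)
      = (p + q) * (1 + p * q) / (p * (1 + p ^ 2) * (1 + q ^ 2)) := by field_simp; ring
  have e₅ : (1 + p ^ 2)⁻¹ + (1 - (1 + p ^ 2)⁻¹) * (q / p) = (1 + p * q) / (1 + p ^ 2) := by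
    field_simp; ring
  have e₆ : q ^ 2 / (1 + q ^ 2) + (1 - q ^ 2 / (1 + q ^ 2)) * (q / p)
      = q * (1 + p * q) / (p * (1 + q ^ 2)) := by field_simp; ring
  have e₇ : (1 + p ^ 2)⁻¹ + q ^ 2 / (1 + q ^ 2) + (2 - (1 + p ^ 2)⁻¹ - q ^ 2 / (1 + q ^ 2)) * (q / p)
      = (p + q) * (1 + p * q) ^ 2 / (p * (1 + p ^ 2) * (1 + q ^ 2)) := by field_simp; ring
  rw [e₁, e₂, e₃, e₄, e₅, e₆, e₇]
  field_simp
  ring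

theorem sin_add_eq_cos_mul_cos_mul_tan_add_tan {α β : ℝ} (hα : cos α ≠ 0) (hβ : cos β ≠ 0) :
    sin (α + β) = cos α * cos β * (tan α + tan β) := by
  rw [sin_add, ← tan_mul_cos hα, ← tan_mul_cos hβ]; ring

theorem sin_sub_eq_cos_mul_cos_mul_tan_sub_tan {α β : ℝ} (hα : cos α ≠ 0) (hβ : cos β ≠ 0) :
    sin (α - β) = cos α * cos β * (tan α - tan β) := by
  rw [sin_sub, ← tan_mul_cos hα, ← tan_mul_cos hβ]; ring

theorem cos_sub_eq_cos_mul_cos_mul_one_add_tan_mul_tan {α β : ℝ} (hα : cos α ≠ 0)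
    (hβ : cos β ≠ 0) : cos (α - β) = cos α * cos β * (1 + tan α * tan β) := by
  rw [cos_sub, ← tan_mul_cos hα, ← tan_mul_cos hβ]; ring

theorem sqrt_mul_div_one_sub_mul_one_sub_tan_param {p q : ℝ} (hp : 0 < p) (hq : 0 ≤ q) :
    √((1 + p ^ 2)⁻¹ * (q ^ 2 / (1 + q ^ 2)) /
        ((1 - (1 + p ^ 2)⁻¹) * (1 - q ^ 2 / (1 + q ^ 2)))) = q / p := by
  rw [show _ / _ = (q / p) ^ 2 by field_simp; ring, sqrt_sq (by positivity)]

theorem exists_tan_coords_of_lt_of_lt_pi_div_two {lam phi : ℝ} (hlam : 0 < lam) (hlp : lam < phi)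
    (hphi : phi < π / 2) :
    ∃ p q c : ℝ, 0 < q ∧ q < p ∧ 0 < c ∧
      cos ((phi + lam) / 2) ^ 2 = (1 + p ^ 2)⁻¹ ∧
      sin ((phi - lam) / 2) ^ 2 = q ^ 2 / (1 + q ^ 2) ∧
      sin phi = c * (p + q) ∧ sin lam = c * (p - q) ∧ cos lam = c * (1 + p * q) := by
  set α := (phi + lam) / 2 with hα
  set β := (phi - lam) / 2 with hβ
  have hβ₀ : 0 < β := by linarith
  have hα₁ : α < π / 2 := by linarith
  have hcα : 0 < cos α := cos_pos_of_mem_Ioo ⟨by linarith, hα₁⟩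
  have hcβ : 0 < cos β := cos_pos_of_mem_Ioo ⟨by linarith, by linarith⟩
  refine ⟨tan α, tan β, cos α * cos β, tan_pos_of_pos_of_lt_pi_div_two hβ₀ (by linarith),
    tan_lt_tan_of_lt_of_lt_pi_div_two (by linarith) hα₁ (by linarith), by positivity,
    (inv_one_add_tan_sq hcα.ne').symm, (tan_sq_div_one_add_tan_sq hcβ.ne').symm, ?_, ?_, ?_⟩
  · rw [← sin_add_eq_cos_mul_cos_mul_tan_add_tan hcα.ne' hcβ.ne', show α + β = phi by linarith]
  · rw [← sin_sub_eq_cos_mul_cos_mul_tan_sub_tan hcα.ne' hcβ.ne', show α - β = lam by linarith]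
  · rw [← cos_sub_eq_cos_mul_cos_mul_one_add_tan_mul_tan hcα.ne' hcβ.ne',
      show α - β = lam by linarith]

/-- in the angle parametrization `x = cos²((φ+λ)/2)`,
`y = sin²((φ−λ)/2)` of the arctic ellipse, (i) `h = √(xy/((1−x)(1−y)))
= (sin φ − sin λ)/(sin φ + sin λ)`, and (ii)
`∂³_η χ(x,y;η)|_{η=h} = −(sin φ − sin λ)(sin φ + sin λ)⁷/(8 sin λ cos⁴λ sin³φ)`. -/
theorem chi_third_deriv_on_arctic_ellipse (lam phi : ℝ)
    (hlam : 0 < lam) (hlp : lam < phi) (hphi : phi < Real.pi / 2) :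
    let x := Real.cos ((phi + lam) / 2) ^ 2
    let y := Real.sin ((phi - lam) / 2) ^ 2
    let h := Real.sqrt (x * y / ((1 - x) * (1 - y)))
    h = (Real.sin phi - Real.sin lam) / (Real.sin phi + Real.sin lam) ∧
    deriv (deriv (deriv (fun η => chi x y η))) h
      = -((Real.sin phi - Real.sin lam) * (Real.sin phi + Real.sin lam) ^ 7) /
          (8 * Real.sin lam * Real.cos lam ^ 4 * Real.sin phi ^ 3) := by
  intro x y h
  obtain ⟨p, q, c, hq, hqp, hc, hx, hy, hsin_phi, hsin_lam, hcos_lam⟩ :=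
    exists_tan_coords_of_lt_of_lt_pi_div_two hlam hlp hphi
  have hh : h = q / p := by
    simp only [h, x, y, hx, hy]
    exact sqrt_mul_div_one_sub_mul_one_sub_tan_param (hq.trans hqp) hq.le
  have hpq : p - q ≠ 0 := by linarith
  refine ⟨?_, ?_⟩
  · rw [hh, hsin_phi, hsin_lam]; field_simp; ring
  · rw [show deriv (deriv (deriv (chi x y))) = iteratedDeriv 3 (chi x y) by
        simp only [iteratedDeriv_succ, iteratedDeriv_zero], hh]
    simp only [x, y, hx, hy]
    rw [iteratedDeriv_three_chi_tan_param hq hqp, hsin_phi, hsin_lam, hcos_lam]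
    field_simp
    ring
end
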